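/- arXiv:2110.11913 — 7 statements merged into one kernel-verified Lean document; each statement's English description precedes it below -/
import Mathlib

section
/- For any integer n ≥ 2, any real α with 2−n ≤ α < 1, and any r with 0 < r < 1, the integral ∫₀^π sin^{n−2}(φ) / (1 − 2r cos φ + r²)^{(n−α)/2} dφ is at most (2^{n−2} (1−r)^{α−1} Γ((1−α)/2) Γ((n−1)/2)) / ((1+r)^{n−1} Γ((n−α)/2)). -/
open Real MeasureTheory Set intervalIntegral

lemma betaCplx {p q : ℝ} (hp : 0 < p) (hq : 0 < q) :
    Complex.betaIntegral p q
      = ((∫ t in (0:ℝ)..1, t ^ (p-1) * (1-t) ^ (q-1) : ℝ) : ℂ) := by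
  rw [← intervalIntegral.integral_ofReal]
  apply intervalIntegral.integral_congr
  intro x hx
  rw [uIcc_of_le zero_le_one] at hx
  simp only
  rw [Complex.ofReal_mul, Complex.ofReal_cpow hx.1,
    Complex.ofReal_cpow (by linarith [hx.2] : (0:ℝ) ≤ 1 - x)]
  push_cast
  ring

lemma betaReal_intble {p q : ℝ} (hp : 0 < p) (hq : 0 < q) :
    IntegrableOn (fun t : ℝ => t ^ (p-1) * (1-t) ^ (q-1)) (Ioo (0:ℝ) 1) := by
  have hC := Complex.betaIntegral_convergent (u := p) (v := q) (by simpa) (by simpa)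
  rw [intervalIntegrable_iff_integrableOn_Ioo_of_le zero_le_one] at hC
  refine MeasureTheory.IntegrableOn.congr_fun hC.re ?_ measurableSet_Ioo
  intro x hx
  have : ((x:ℂ) ^ ((p:ℂ) - 1) * (1 - (x:ℂ)) ^ ((q:ℂ) - 1))
      = ((x ^ (p-1) * (1-x) ^ (q-1) : ℝ) : ℂ) := by
    rw [Complex.ofReal_mul, Complex.ofReal_cpow hx.1.le,
      Complex.ofReal_cpow (by linarith [hx.2] : (0:ℝ) ≤ 1 - x)]
    push_cast
    ring
  simp only
  rw [this]
  exact Complex.ofReal_re _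

lemma betaReal_eq {p q : ℝ} (hp : 0 < p) (hq : 0 < q) :
    ∫ t in (0:ℝ)..1, t ^ (p-1) * (1-t) ^ (q-1) = Gamma p * Gamma q / Gamma (p+q) := by
  have h := Complex.Gamma_mul_Gamma_eq_betaIntegral (s := (p:ℂ)) (t := (q:ℂ))
    (by simpa) (by simpa)
  rw [betaCplx hp hq, ← Complex.ofReal_add, Complex.Gamma_ofReal, Complex.Gamma_ofReal,
    Complex.Gamma_ofReal, ← Complex.ofReal_mul, ← Complex.ofReal_mul] at h
  have h' := Complex.ofReal_injective h
  have hΓ : Gamma (p+q) ≠ 0 := (Real.Gamma_pos_of_pos (by linarith)).ne'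
  field_simp
  linarith [h']

lemma pow_combo (x y : ℝ) {A B S C E : ℝ} (hA : 0 < A) (hB : 0 < B) (hS : 0 < S)
    (hC : 0 < C) (hE : 0 < E) :
    B^2*A^2*S*C/E^2 * ((A^2*S^2/E) ^ x * (B^2*C^2/E) ^ y)
      = A^(2*x+2) * B^(2*y+2) * S^(2*x+1) * C^(2*y+1) * E^(-x-y-2) := by
  obtain ⟨a, rfl⟩ : ∃ a, A = Real.exp a := ⟨Real.log A, (Real.exp_log hA).symm⟩
  obtain ⟨b, rfl⟩ : ∃ b, B = Real.exp b := ⟨Real.log B, (Real.exp_log hB).symm⟩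
  obtain ⟨s, rfl⟩ : ∃ s, S = Real.exp s := ⟨Real.log S, (Real.exp_log hS).symm⟩
  obtain ⟨c, rfl⟩ : ∃ c, C = Real.exp c := ⟨Real.log C, (Real.exp_log hC).symm⟩
  obtain ⟨e, rfl⟩ : ∃ e, E = Real.exp e := ⟨Real.log E, (Real.exp_log hE).symm⟩
  simp only [← Real.exp_nat_mul, ← Real.exp_mul, ← Real.exp_add, ← Real.exp_sub]
  rw [Real.exp_eq_exp]
  push_cast
  ring

/-- Upper bound for the spherical integral of the Poisson-type kernel. -/
theorem stmt_0 (n : ℕ) (hn : 2 ≤ n) (α : ℝ) (hα1 : 2 - (n : ℝ) ≤ α) (hα2 : α < 1)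
    (r : ℝ) (hr0 : 0 < r) (hr1 : r < 1) :
    ∫ φ in (0:ℝ)..Real.pi,
        Real.sin φ ^ (n - 2) / (1 - 2 * r * Real.cos φ + r ^ 2) ^ (((n : ℝ) - α) / 2)
      ≤ 2 ^ (n - 2) * (1 - r) ^ (α - 1) * Real.Gamma ((1 - α) / 2) *
          Real.Gamma (((n : ℝ) - 1) / 2) /
        ((1 + r) ^ (n - 1) * Real.Gamma (((n : ℝ) - α) / 2)) := by
  have hn2 : ((n - 2 : ℕ) : ℝ) = (n : ℝ) - 2 := by
    push_cast [hn]; ring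
  have hn1 : ((n - 1 : ℕ) : ℝ) = (n : ℝ) - 1 := by
    push_cast [le_trans one_le_two hn]; ring
  have hnR : (2:ℝ) ≤ (n:ℝ) := by exact_mod_cast hn
  set D : ℝ → ℝ := fun φ => 1 - 2 * r * Real.cos φ + r ^ 2 with hD_def
  have hDpos : ∀ φ, 0 < D φ := by
    intro φ
    have := Real.cos_le_one φ
    have := Real.neg_one_le_cos φ
    simp only [hD_def]
    nlinarith
  set T : ℝ → ℝ := fun φ => (1+r)^2 * Real.sin (φ/2) ^ 2 / D φ with hT_def
  set T' : ℝ → ℝ := fun φ =>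
    (1-r)^2 * (1+r)^2 * Real.sin (φ/2) * Real.cos (φ/2) / D φ ^ 2 with hT'_def
  have hcosφ : ∀ φ : ℝ, Real.cos φ = 1 - 2 * Real.sin (φ/2) ^ 2 := by
    intro φ
    have h1 : Real.cos (2 * (φ/2)) = 2 * Real.cos (φ/2) ^ 2 - 1 := Real.cos_two_mul _
    have h2 := Real.sin_sq_add_cos_sq (φ/2)
    rw [show 2 * (φ/2) = φ by ring] at h1
    linarith
  have hsinφ : ∀ φ : ℝ, Real.sin φ = 2 * Real.sin (φ/2) * Real.cos (φ/2) := by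
    intro φ
    rw [show φ = 2 * (φ/2) by ring, Real.sin_two_mul]
    ring_nf
  have hT : ∀ φ, HasDerivAt T (T' φ) φ := by
    intro φ
    have h1 : HasDerivAt (fun x : ℝ => (1+r)^2 * Real.sin (x/2) ^ 2)
        ((1+r)^2 * (2 * Real.sin (φ/2) * (Real.cos (φ/2) * (1/2)))) φ := by
      have hs : HasDerivAt (fun x : ℝ => Real.sin (x/2)) (Real.cos (φ/2) * (1/2)) φ :=
        by have := (Real.hasDerivAt_sin (φ/2)).comp φ ((hasDerivAt_id φ).div_const 2); exact this
      have := (hs.pow 2).const_mul ((1+r)^2)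
      refine this.congr_deriv ?_
      ring
    have h2 : HasDerivAt D (2 * r * Real.sin φ) φ := by
      have hc : HasDerivAt (fun x : ℝ => Real.cos x) (-Real.sin φ) φ := Real.hasDerivAt_cos φ
      have := ((hc.const_mul (2*r)).const_sub 1).add_const (r^2)
      refine this.congr_deriv ?_
      ring
    have h3 := h1.div h2 (hDpos φ).ne'
    have hnum : (1-r)^2 * (1+r)^2 * Real.sin (φ/2) * Real.cos (φ/2)
        = (1+r)^2 * (2 * Real.sin (φ/2) * (Real.cos (φ/2) * (1/2))) * D φ
          - (1+r)^2 * Real.sin (φ/2) ^ 2 * (2 * r * Real.sin φ) := by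
      rw [hsinφ φ]
      simp only [hD_def]
      rw [hcosφ φ]
      ring
    refine h3.congr_deriv ?_
    simp only [hT'_def]
    rw [hnum]
  -- basic positivity on (0, π)
  have hs_pos : ∀ φ ∈ Ioo (0:ℝ) Real.pi, 0 < Real.sin (φ/2) := fun φ hφ =>
    Real.sin_pos_of_pos_of_lt_pi (by linarith [hφ.1]) (by linarith [hφ.2, Real.pi_pos])
  have hc_pos : ∀ φ ∈ Ioo (0:ℝ) Real.pi, 0 < Real.cos (φ/2) := fun φ hφ =>
    Real.cos_pos_of_mem_Ioo ⟨by linarith [hφ.1, Real.pi_pos], by linarith [hφ.2]⟩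
  have hA : (0:ℝ) < 1 + r := by linarith
  have hB : (0:ℝ) < 1 - r := by linarith
  have hT'pos : ∀ φ ∈ Ioo (0:ℝ) Real.pi, 0 < T' φ := by
    intro φ hφ
    have h1 := hs_pos φ hφ
    have h2 := hc_pos φ hφ
    have h3 := hDpos φ
    simp only [hT'_def]
    positivity
  have hTcont : Continuous T := by
    apply Continuous.div
    · fun_prop
    · fun_prop
    · exact fun x => (hDpos x).ne'
  have hTmono : StrictMonoOn T (Icc 0 Real.pi) := by
    apply strictMonoOn_of_deriv_pos (convex_Icc _ _) hTcont.continuousOn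
    intro x hx
    rw [interior_Icc] at hx
    rw [(hT x).deriv]
    exact hT'pos x hx
  have hT0 : T 0 = 0 := by simp [hT_def]
  have hTπ : T Real.pi = 1 := by
    simp only [hT_def, hD_def]
    have h4 : 1 - 2*r*Real.cos Real.pi + r^2 = (1+r)^2 := by rw [Real.cos_pi]; ring
    rw [h4, Real.sin_pi_div_two, one_pow, mul_one, div_self (by positivity)]
  have hInj : InjOn T (Ioo 0 Real.pi) := (hTmono.mono Ioo_subset_Icc_self).injOn
  have hImg : T '' Ioo 0 Real.pi = Ioo 0 1 := by
    apply Subset.antisymm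
    · rintro _ ⟨x, hx, rfl⟩
      constructor
      · have := hTmono (left_mem_Icc.mpr Real.pi_pos.le) (Ioo_subset_Icc_self hx) hx.1
        rwa [hT0] at this
      · have := hTmono (Ioo_subset_Icc_self hx) (right_mem_Icc.mpr Real.pi_pos.le) hx.2
        rwa [hTπ] at this
    · have h := intermediate_value_Ioo Real.pi_pos.le hTcont.continuousOn
      rwa [hT0, hTπ] at h
  set p : ℝ := ((n:ℝ)-1)/2 with hp_def
  set q : ℝ := (1-α)/2 with hq_def
  have hp : 0 < p := by simp only [hp_def]; linarith
  have hq : 0 < q := by simp only [hq_def]; linarith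
  set g : ℝ → ℝ := fun t => t ^ (p-1) * (1-t) ^ (q-1) with hg_def
  set C0 : ℝ := 2 ^ (n-2) * (1-r) ^ (α-1) / (1+r) ^ (n-1) with hC0_def
  -- the key pointwise identity
  have key : ∀ φ ∈ Ioo (0:ℝ) Real.pi, |T' φ| * g (T φ)
      = (1+r) ^ (n-1) * (1-r) ^ (1-α) * Real.sin (φ/2) ^ (n-2)
        * Real.cos (φ/2) ^ (-α) * D φ ^ ((α-(n:ℝ))/2) := by
    intro φ hφ
    have hs := hs_pos φ hφ
    have hc := hc_pos φ hφ
    have hd := hDpos φ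
    have h1Teq : 1 - T φ = (1-r)^2 * Real.cos (φ/2)^2 / D φ := by
      have hc2 : Real.cos (φ/2) ^ 2 = 1 - Real.sin (φ/2) ^ 2 := by
        have := Real.sin_sq_add_cos_sq (φ/2); linarith
      simp only [hT_def]
      rw [eq_div_iff hd.ne', sub_mul, div_mul_cancel₀ _ hd.ne', hc2]
      simp only [hD_def]
      rw [hcosφ φ]
      ring
    rw [abs_of_pos (hT'pos φ hφ), hg_def]
    simp only [hT'_def, hT_def]
    rw [h1Teq, pow_combo (p-1) (q-1) hA hB hs hc hd]
    rw [show 2*(p-1)+2 = ((n:ℝ)-1) by simp only [hp_def]; ring,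
      show 2*(q-1)+2 = 1-α by simp only [hq_def]; ring,
      show 2*(p-1)+1 = ((n:ℝ)-2) by simp only [hp_def]; ring,
      show 2*(q-1)+1 = -α by simp only [hq_def]; ring,
      show -(p-1)-(q-1)-2 = (α-(n:ℝ))/2 by simp only [hp_def, hq_def]; ring,
      ← hn1, ← hn2, Real.rpow_natCast, Real.rpow_natCast]
  -- the pointwise inequality
  have hineq : ∀ φ ∈ Ioo (0:ℝ) Real.pi,
      Real.sin φ ^ (n-2) / D φ ^ (((n:ℝ)-α)/2) ≤ C0 * (|T' φ| * g (T φ)) := by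
    intro φ hφ
    have hs := hs_pos φ hφ
    have hc := hc_pos φ hφ
    have hd := hDpos φ
    have hcle : Real.cos (φ/2) ^ (n-2) ≤ Real.cos (φ/2) ^ (-α) := by
      rw [← Real.rpow_natCast (Real.cos (φ/2)) (n-2), hn2]
      exact Real.rpow_le_rpow_of_exponent_ge hc
        (Real.cos_le_one _) (by linarith)
    have hfeq : Real.sin φ ^ (n-2) / D φ ^ (((n:ℝ)-α)/2)
        = 2 ^ (n-2) * Real.sin (φ/2) ^ (n-2) * (Real.cos (φ/2) ^ (n-2) * D φ ^ ((α-(n:ℝ))/2)) := by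
      rw [hsinφ φ, div_eq_mul_inv, ← Real.rpow_neg hd.le,
        show -(((n:ℝ)-α)/2) = (α-(n:ℝ))/2 by ring]
      rw [mul_pow, mul_pow]
      ring
    have hBB : (1-r) ^ (α-1) * (1-r) ^ (1-α) = 1 := by
      rw [← Real.rpow_add hB]
      norm_num
    have hC0A : C0 * ((1+r) ^ (n-1) * (1-r) ^ (1-α)) = 2 ^ (n-2) := by
      simp only [hC0_def]
      rw [div_mul_eq_mul_div, mul_comm ((1+r)^(n-1)) ((1-r)^(1-α)), ← mul_assoc,
        mul_div_assoc, div_self (by positivity : ((1+r):ℝ) ^ (n-1) ≠ 0), mul_one,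
        mul_assoc, hBB, mul_one]
    calc Real.sin φ ^ (n-2) / D φ ^ (((n:ℝ)-α)/2)
        = 2 ^ (n-2) * Real.sin (φ/2) ^ (n-2) * (Real.cos (φ/2) ^ (n-2) * D φ ^ ((α-(n:ℝ))/2)) :=
          hfeq
      _ ≤ 2 ^ (n-2) * Real.sin (φ/2) ^ (n-2) * (Real.cos (φ/2) ^ (-α) * D φ ^ ((α-(n:ℝ))/2)) := by
          gcongr
      _ = C0 * (|T' φ| * g (T φ)) := by
          rw [key φ hφ, ← hC0A]
          ring
  -- integrability
  have hf_cont : Continuous (fun φ => Real.sin φ ^ (n-2) / D φ ^ (((n:ℝ)-α)/2)) := by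
    apply Continuous.div
    · fun_prop
    · apply Continuous.rpow_const
      · fun_prop
      · exact fun x => Or.inl (hDpos x).ne'
    · exact fun x => (Real.rpow_pos_of_pos (hDpos x) _).ne'
  have hf_int : IntegrableOn (fun φ => Real.sin φ ^ (n-2) / D φ ^ (((n:ℝ)-α)/2))
      (Ioo 0 Real.pi) :=
    (hf_cont.continuousOn.integrableOn_compact isCompact_Icc).mono_set Ioo_subset_Icc_self
  have hg_int : IntegrableOn g (Ioo (0:ℝ) 1) := betaReal_intble hp hq
  have hsub_int : IntegrableOn (fun φ => |T' φ| * g (T φ)) (Ioo 0 Real.pi) := by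
    have := (MeasureTheory.integrableOn_image_iff_integrableOn_abs_deriv_smul
      measurableSet_Ioo (fun x _ => (hT x).hasDerivWithinAt) hInj g).mp (by rw [hImg]; exact hg_int)
    simpa [smul_eq_mul] using this
  have hsub_eq : ∫ t in Ioo (0:ℝ) 1, g t = ∫ φ in Ioo 0 Real.pi, |T' φ| * g (T φ) := by
    rw [← hImg]
    have := MeasureTheory.integral_image_eq_integral_abs_deriv_smul
      measurableSet_Ioo (fun x _ => (hT x).hasDerivWithinAt) hInj g
    simpa [smul_eq_mul] using this
  -- main chain
  have hΓpos : 0 < Real.Gamma (((n:ℝ)-α)/2) := Real.Gamma_pos_of_pos (by linarith)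
  rw [intervalIntegral.integral_of_le Real.pi_pos.le, MeasureTheory.integral_Ioc_eq_integral_Ioo]
  calc ∫ φ in Ioo (0:ℝ) Real.pi, Real.sin φ ^ (n-2) / D φ ^ (((n:ℝ)-α)/2)
      ≤ ∫ φ in Ioo (0:ℝ) Real.pi, C0 * (|T' φ| * g (T φ)) :=
        setIntegral_mono_on hf_int (hsub_int.const_mul C0) measurableSet_Ioo hineq
    _ = C0 * ∫ φ in Ioo (0:ℝ) Real.pi, |T' φ| * g (T φ) := by
        rw [MeasureTheory.integral_const_mul]
    _ = C0 * ∫ t in Ioo (0:ℝ) 1, g t := by rw [hsub_eq]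
    _ = C0 * ∫ t in (0:ℝ)..1, g t := by
        rw [intervalIntegral.integral_of_le zero_le_one,
          MeasureTheory.integral_Ioc_eq_integral_Ioo]
    _ = C0 * (Real.Gamma p * Real.Gamma q / Real.Gamma (p+q)) := by
        rw [hg_def, betaReal_eq hp hq]
    _ = 2 ^ (n - 2) * (1 - r) ^ (α - 1) * Real.Gamma ((1 - α) / 2) *
          Real.Gamma (((n : ℝ) - 1) / 2) /
        ((1 + r) ^ (n - 1) * Real.Gamma (((n : ℝ) - α) / 2)) := by
        rw [show p + q = ((n:ℝ)-α)/2 by simp only [hp_def, hq_def]; ring]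
        simp only [hC0_def, hp_def, hq_def]
        field_simp
end

section
/- For any integer n ≥ 2, any real α with 2−n ≤ α < 1, and any r with 0 < r < 1, the integral ∫₀^π sin^{n−2}(φ) / (1 − 2r cos φ + r²)^{(n−α)/2} dφ is at least (2^{n−2} (1−r)^{α−1} Γ((n−1)/2)²) / ((1+r)^{n−1} Γ(n−1)). -/
open Real

lemma sin_pow_int (m : ℕ) :
    ∫ x in (0:ℝ)..π, Real.sin x ^ m
      = Real.sqrt π * Real.Gamma (((m : ℝ) + 1) / 2) / Real.Gamma ((m : ℝ) / 2 + 1) := by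
  induction m using Nat.twoStepInduction with
  | zero =>
      simp only [Nat.cast_zero, pow_zero]
      norm_num [Real.Gamma_one]
      rw [show (1:ℝ)/2 = 1/2 from rfl, Real.Gamma_one_half_eq, Real.mul_self_sqrt Real.pi_pos.le]
  | one =>
      simp only [Nat.cast_one, pow_one, integral_sin]
      norm_num
      rw [show (3:ℝ)/2 = 1/2 + 1 by norm_num, Real.Gamma_add_one (by norm_num),
        Real.Gamma_one_half_eq, eq_div_iff (by positivity)]
      ring
  | more m ih _ =>
      have h := integral_sin_pow (a := 0) (b := π) m
      simp only [Real.sin_zero, Real.sin_pi, zero_pow, ne_eq, Nat.succ_ne_zero,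
        not_false_iff, zero_mul, mul_zero, sub_zero, zero_sub, zero_div, zero_add] at h
      rw [h, ih]
      have h1 : (((m:ℕ) + 2 : ℕ) : ℝ) = (m:ℝ) + 2 := by push_cast; ring
      rw [h1]
      have e1 : ((m:ℝ) + 2 + 1) / 2 = ((m:ℝ)+1)/2 + 1 := by ring
      have e2 : ((m:ℝ) + 2) / 2 + 1 = ((m:ℝ)/2 + 1) + 1 := by ring
      rw [e1, e2, Real.Gamma_add_one (s := ((m:ℝ)+1)/2) (by positivity),
        Real.Gamma_add_one (s := (m:ℝ)/2 + 1) (by positivity)]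
      have g1 : 0 < Real.Gamma ((m:ℝ)/2 + 1) := Real.Gamma_pos_of_pos (by positivity)
      have g2 : 0 < Real.Gamma (((m:ℝ)+1)/2) := Real.Gamma_pos_of_pos (by positivity)
      field_simp

/-- Lower bound for the spherical integral of the Poisson-type kernel. -/
theorem stmt_1 (n : ℕ) (hn : 2 ≤ n) (α : ℝ) (hα1 : 2 - (n : ℝ) ≤ α) (hα2 : α < 1)
    (r : ℝ) (hr0 : 0 < r) (hr1 : r < 1) :
    2 ^ (n - 2) * (1 - r) ^ (α - 1) * Real.Gamma (((n : ℝ) - 1) / 2) ^ 2 /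
        ((1 + r) ^ (n - 1) * Real.Gamma ((n : ℝ) - 1))
      ≤ ∫ φ in (0:ℝ)..Real.pi,
          Real.sin φ ^ (n - 2) / (1 - 2 * r * Real.cos φ + r ^ 2) ^ (((n : ℝ) - α) / 2) := by
  have hπ := Real.pi_pos
  have h1r : (0:ℝ) < 1 + r := by linarith
  have h1r' : (0:ℝ) < 1 - r := by linarith
  have he : (0:ℝ) < 1 - r^2 := by nlinarith
  have hP : ∀ ψ : ℝ, 0 < 1 + r^2 + 2*r*Real.cos ψ := by
    intro ψ; nlinarith [Real.neg_one_le_cos ψ]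
  have hPle : ∀ ψ : ℝ, 1 + r^2 + 2*r*Real.cos ψ ≤ (1+r)^2 := by
    intro ψ; nlinarith [Real.cos_le_one ψ]
  have hD : ∀ φ : ℝ, 0 < 1 - 2*r*Real.cos φ + r^2 := by
    intro φ; nlinarith [Real.cos_le_one φ]
  set M : ℝ → ℝ := fun ψ => ((1+r^2)*Real.cos ψ + 2*r)/(1 + r^2 + 2*r*Real.cos ψ) with hM
  set g : ℝ → ℝ := fun ψ => Real.arccos (M ψ) with hg
  have hM_sq : ∀ ψ, 1 - M ψ^2
      = (Real.sin ψ)^2 * (1-r^2)^2/(1 + r^2 + 2*r*Real.cos ψ)^2 := by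
    intro ψ
    have hc := Real.sin_sq_add_cos_sq ψ
    rw [hM]
    have hPne := (hP ψ).ne'
    rw [div_pow, eq_div_iff (pow_ne_zero 2 hPne), sub_mul, div_mul_cancel₀ _ (pow_ne_zero 2 hPne)]
    linear_combination (-(1-r^2)^2) * hc
  have hMb : ∀ ψ : ℝ, -1 ≤ M ψ ∧ M ψ ≤ 1 := by
    intro ψ
    have h := hM_sq ψ
    have h2 : 0 ≤ 1 - M ψ^2 := by rw [h]; positivity
    constructor <;> nlinarith [h2]
  have hcos_g : ∀ ψ : ℝ, Real.cos (g ψ) = M ψ := by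
    intro ψ; rw [hg]; exact Real.cos_arccos (hMb ψ).1 (hMb ψ).2
  have hsqrt : ∀ ψ ∈ Set.Icc (0:ℝ) π, Real.sqrt (1 - M ψ^2)
      = Real.sin ψ * (1-r^2)/(1 + r^2 + 2*r*Real.cos ψ) := by
    intro ψ hψ
    have hs : 0 ≤ Real.sin ψ := Real.sin_nonneg_of_nonneg_of_le_pi hψ.1 hψ.2
    rw [hM_sq ψ, show (Real.sin ψ)^2 * (1-r^2)^2/(1 + r^2 + 2*r*Real.cos ψ)^2
      = (Real.sin ψ * (1-r^2)/(1 + r^2 + 2*r*Real.cos ψ))^2 by rw [div_pow, mul_pow]]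
    exact Real.sqrt_sq (div_nonneg (mul_nonneg hs he.le) (hP ψ).le)
  have hsin_g : ∀ ψ ∈ Set.Icc (0:ℝ) π, Real.sin (g ψ)
      = Real.sin ψ * (1-r^2)/(1 + r^2 + 2*r*Real.cos ψ) := by
    intro ψ hψ
    rw [hg]
    show Real.sin (Real.arccos (M ψ)) = _
    rw [Real.sin_arccos]
    exact hsqrt ψ hψ
  have hDg : ∀ ψ : ℝ, 1 - 2*r*Real.cos (g ψ) + r^2
      = (1-r^2)^2/(1 + r^2 + 2*r*Real.cos ψ) := by
    intro ψ
    rw [hcos_g ψ, hM]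
    have hPne := (hP ψ).ne'
    field_simp
    ring
  have hg0 : g 0 = 0 := by
    have hM0 : M 0 = 1 := by
      rw [hM]
      show ((1+r^2)*Real.cos 0 + 2*r)/(1 + r^2 + 2*r*Real.cos 0) = 1
      have h0 := hP 0
      rw [Real.cos_zero] at h0
      rw [Real.cos_zero, div_eq_one_iff_eq h0.ne']
      ring
    rw [hg]; show Real.arccos (M 0) = 0; rw [hM0, Real.arccos_one]
  have hgpi : g π = π := by
    have hMpi : M π = -1 := by
      rw [hM]
      show ((1+r^2)*Real.cos π + 2*r)/(1 + r^2 + 2*r*Real.cos π) = -1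
      have h0 := hP π
      rw [Real.cos_pi] at h0
      rw [Real.cos_pi, div_eq_iff h0.ne']
      ring
    rw [hg]; show Real.arccos (M π) = π; rw [hMpi, Real.arccos_neg_one]
  have hgd : ∀ ψ ∈ Set.Ioo (0:ℝ) π,
      HasDerivAt g ((1-r^2)/(1 + r^2 + 2*r*Real.cos ψ)) ψ := by
    intro ψ hψ
    have hsψ : 0 < Real.sin ψ := Real.sin_pos_of_pos_of_lt_pi hψ.1 hψ.2
    have h1M : 0 < 1 - M ψ^2 := by
      rw [hM_sq ψ]
      exact div_pos (mul_pos (pow_pos hsψ 2) (pow_pos he 2)) (pow_pos (hP ψ) 2)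
    have hMne1 : M ψ ≠ 1 := by intro h; rw [h] at h1M; norm_num at h1M
    have hMne1' : M ψ ≠ -1 := by intro h; rw [h] at h1M; norm_num at h1M
    have hM' : HasDerivAt M (-Real.sin ψ*(1-r^2)^2/(1 + r^2 + 2*r*Real.cos ψ)^2) ψ := by
      have h1 : HasDerivAt (fun ψ : ℝ => (1+r^2)*Real.cos ψ + 2*r)
          ((1+r^2)*(-Real.sin ψ)) ψ := ((Real.hasDerivAt_cos ψ).const_mul (1+r^2)).add_const (2*r)
      have h2 : HasDerivAt (fun ψ : ℝ => 1 + r^2 + 2*r*Real.cos ψ)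
          (2*r*(-Real.sin ψ)) ψ := ((Real.hasDerivAt_cos ψ).const_mul (2*r)).const_add (1+r^2)
      have h3 := h1.div h2 (hP ψ).ne'
      rw [hM]
      refine h3.congr_deriv ?_
      have hPne := (hP ψ).ne'
      field_simp
      ring
    have harc := Real.hasDerivAt_arccos hMne1' hMne1
    have hcomp := harc.comp ψ hM'
    have : g = Real.arccos ∘ M := by rw [hg]; rfl
    rw [this]
    refine hcomp.congr_deriv ?_
    rw [hsqrt ψ (Set.mem_Icc.2 ⟨hψ.1.le, hψ.2.le⟩)]
    have hPne := (hP ψ).ne'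
    have hsne := hsψ.ne'
    field_simp
  set F : ℝ → ℝ := fun φ => Real.sin φ ^ (n-2) / (1 - 2*r*Real.cos φ + r^2) ^ (((n:ℝ)-α)/2) with hF
  have hFcont : Continuous F := by
    rw [hF]
    apply Continuous.div
    · exact Real.continuous_sin.pow _
    · apply Continuous.rpow_const
      · fun_prop
      · intro x; exact Or.inl (hD x).ne'
    · intro x; exact (Real.rpow_pos_of_pos (hD x) _).ne'
  have hgcont : Continuous g := by
    rw [hg]
    apply Real.continuous_arccos.comp
    rw [hM]
    exact Continuous.div (by fun_prop) (by fun_prop) (fun x => (hP x).ne')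
  have hg'cont : Continuous (fun ψ => (1-r^2)/(1 + r^2 + 2*r*Real.cos ψ)) :=
    Continuous.div continuous_const (by fun_prop) (fun x => (hP x).ne')
  have hsub : ∫ ψ in (0:ℝ)..π, ((1-r^2)/(1 + r^2 + 2*r*Real.cos ψ)) • F (g ψ)
      = ∫ φ in (0:ℝ)..π, F φ := by
    have h := intervalIntegral.integral_comp_smul_deriv'' (a := 0) (b := π)
      (f := g) (f' := fun ψ => (1-r^2)/(1 + r^2 + 2*r*Real.cos ψ)) (g := F)
      hgcont.continuousOn ?_ hg'cont.continuousOn hFcont.continuousOn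
    · rw [hg0, hgpi] at h
      exact h
    · intro x hx
      rw [min_eq_left hπ.le, max_eq_right hπ.le] at hx
      exact (hgd x hx).hasDerivWithinAt
  have hn2 : (2:ℝ) ≤ (n:ℝ) := by exact_mod_cast hn
  have hβ : (0:ℝ) ≤ ((n:ℝ)+α-2)/2 := by linarith
  have hncast : ((n-2 : ℕ) : ℝ) = (n:ℝ)-2 := by
    rw [Nat.cast_sub hn]; norm_num
  have expcomb : ∀ A B C : ℝ, ∀ k : ℕ, ∀ u : ℝ,
      Real.exp A * (u^k * Real.exp B / Real.exp C) = u^k * Real.exp (A+B-C) := by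
    intros A B C k u
    rw [Real.exp_sub, Real.exp_add]
    ring
  have core : ∀ p u : ℝ, 0 < p → p ≤ (1+r)^2 → 0 ≤ u →
      (1-r)^(α-1) * ((1+r)^(n-1) : ℝ)⁻¹ * u^(n-2)
        ≤ ((1-r^2)/p) * ((u*(1-r^2)/p)^(n-2) / ((1-r^2)^2/p) ^ (((n:ℝ)-α)/2)) := by
    intro p u hp hple hu
    have e1 : (1-r^2)/p = Real.exp (Real.log (1-r^2) - Real.log p) := by
      rw [← Real.log_div he.ne' hp.ne', Real.exp_log (div_pos he hp)]
    have e2 : (u*(1-r^2)/p)^(n-2)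
        = u^(n-2) * Real.exp (((n:ℝ)-2) * (Real.log (1-r^2) - Real.log p)) := by
      rw [show u*(1-r^2)/p = u * ((1-r^2)/p) by ring, mul_pow, e1, ← Real.exp_nat_mul, hncast]
    have e3 : ((1-r^2)^2/p) ^ (((n:ℝ)-α)/2)
        = Real.exp ((2*Real.log (1-r^2) - Real.log p) * (((n:ℝ)-α)/2)) := by
      rw [Real.rpow_def_of_pos (div_pos (pow_pos he 2) hp)]
      congr 2
      rw [Real.log_div (pow_pos he 2).ne' hp.ne', Real.log_pow]
      push_cast; ring
    have e4 : (1-r^2)^(α-1) = Real.exp ((α-1) * Real.log (1-r^2)) := by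
      rw [Real.rpow_def_of_pos he, mul_comm]
    have e5 : p ^ (((n:ℝ)+α-2)/2) = Real.exp ((((n:ℝ)+α-2)/2) * Real.log p) := by
      rw [Real.rpow_def_of_pos hp, mul_comm]
    have hexp : ((1-r^2)/p) * ((u*(1-r^2)/p)^(n-2) / ((1-r^2)^2/p) ^ (((n:ℝ)-α)/2))
        = u^(n-2) * ((1-r^2)^(α-1) / p ^ (((n:ℝ)+α-2)/2)) := by
      rw [e1, e2, e3, expcomb, e4, e5, ← Real.exp_sub]
      congr 2
      ring
    rw [hexp]
    have h1 : p ^ (((n:ℝ)+α-2)/2) ≤ ((1+r)^2 : ℝ) ^ (((n:ℝ)+α-2)/2) :=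
      Real.rpow_le_rpow hp.le hple hβ
    have h2 : (((1+r):ℝ)^2) ^ (((n:ℝ)+α-2)/2) = (1+r) ^ ((n:ℝ)+α-2) := by
      rw [← Real.rpow_natCast (1+r) 2, ← Real.rpow_mul h1r.le]
      congr 1
      push_cast
      ring
    have h3 : ((1:ℝ)-r^2)^(α-1) = (1-r)^(α-1) * (1+r)^(α-1) := by
      rw [show (1:ℝ)-r^2 = (1-r)*(1+r) by ring, Real.mul_rpow h1r'.le h1r.le]
    have h4 : ((1+r):ℝ)^(α-1) / (1+r)^((n:ℝ)+α-2) = ((1+r)^(n-1) : ℝ)⁻¹ := by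
      rw [← Real.rpow_sub h1r, show α-1-((n:ℝ)+α-2) = -((n:ℝ)-1) by ring,
        Real.rpow_neg h1r.le, show ((n:ℝ)-1) = ((n-1 : ℕ):ℝ) by
          rw [Nat.cast_sub (by omega : 1 ≤ n)]; norm_num,
        Real.rpow_natCast]
    calc (1-r)^(α-1) * ((1+r)^(n-1) : ℝ)⁻¹ * u^(n-2)
        = u^(n-2) * ((1-r)^(α-1) * (((1+r):ℝ)^(α-1) / (1+r)^((n:ℝ)+α-2))) := by
          rw [h4]; ring
      _ = u^(n-2) * (((1:ℝ)-r^2)^(α-1) / (1+r)^((n:ℝ)+α-2)) := by rw [h3]; ring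
      _ ≤ u^(n-2) * (((1:ℝ)-r^2)^(α-1) / p ^ (((n:ℝ)+α-2)/2)) := by
          have hnum : (0:ℝ) ≤ ((1:ℝ)-r^2)^(α-1) := (Real.rpow_pos_of_pos he _).le
          have hden : (0:ℝ) < p ^ (((n:ℝ)+α-2)/2) := Real.rpow_pos_of_pos hp _
          have hle : p ^ (((n:ℝ)+α-2)/2) ≤ (1+r) ^ ((n:ℝ)+α-2) := h2 ▸ h1
          gcongr
  have hpt : ∀ ψ ∈ Set.Icc (0:ℝ) π,
      (1-r)^(α-1) * ((1+r)^(n-1) : ℝ)⁻¹ * Real.sin ψ^(n-2)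
        ≤ ((1-r^2)/(1 + r^2 + 2*r*Real.cos ψ)) • F (g ψ) := by
    intro ψ hψ
    have hs : 0 ≤ Real.sin ψ := Real.sin_nonneg_of_nonneg_of_le_pi hψ.1 hψ.2
    have h := core (1 + r^2 + 2*r*Real.cos ψ) (Real.sin ψ) (hP ψ) (hPle ψ) hs
    rw [smul_eq_mul, hF]
    simp only []
    rw [hsin_g ψ hψ, hDg ψ]
    exact h
  have hint1 : IntervalIntegrable
      (fun ψ => (1-r)^(α-1) * ((1+r)^(n-1) : ℝ)⁻¹ * Real.sin ψ^(n-2))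
      MeasureTheory.volume 0 π :=
    Continuous.intervalIntegrable (by fun_prop) _ _
  have hint2 : IntervalIntegrable
      (fun ψ => ((1-r^2)/(1 + r^2 + 2*r*Real.cos ψ)) • F (g ψ)) MeasureTheory.volume 0 π :=
    (hg'cont.smul (hFcont.comp hgcont)).intervalIntegrable _ _
  have hmono := intervalIntegral.integral_mono_on hπ.le hint1 hint2 hpt
  rw [hsub, intervalIntegral.integral_const_mul] at hmono
  have hS := sin_pow_int (n-2)
  rw [hncast, show ((n:ℝ)-2+1)/2 = ((n:ℝ)-1)/2 by ring,
    show ((n:ℝ)-2)/2+1 = (n:ℝ)/2 by ring] at hS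
  rw [hS] at hmono
  have hdup := Real.Gamma_mul_Gamma_add_half (((n:ℝ)-1)/2)
  rw [show ((n:ℝ)-1)/2 + 1/2 = (n:ℝ)/2 by ring, show 1-2*(((n:ℝ)-1)/2) = 2-(n:ℝ) by ring,
    show 2*(((n:ℝ)-1)/2) = (n:ℝ)-1 by ring] at hdup
  have hG1 : 0 < Real.Gamma (((n:ℝ)-1)/2) := Real.Gamma_pos_of_pos (by linarith)
  have hG2 : 0 < Real.Gamma ((n:ℝ)/2) := Real.Gamma_pos_of_pos (by linarith)
  have hG3 : 0 < Real.Gamma ((n:ℝ)-1) := Real.Gamma_pos_of_pos (by linarith)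
  have hsπ : (0:ℝ) < Real.sqrt π := Real.sqrt_pos.2 hπ
  have h2pow : ((2:ℝ)^((2:ℝ)-(n:ℝ))) * (2:ℝ)^(n-2:ℕ) = 1 := by
    rw [← Real.rpow_natCast 2 (n-2), hncast, ← Real.rpow_add two_pos]
    norm_num
  have hXpos : (0:ℝ) < (1-r)^(α-1) := Real.rpow_pos_of_pos h1r' _
  have hQpos : (0:ℝ) < (1+r)^(n-1) := pow_pos h1r _
  have hfinal : (2:ℝ)^(n-2) * (1-r)^(α-1) * Real.Gamma (((n:ℝ)-1)/2)^2
      / ((1+r)^(n-1) * Real.Gamma ((n:ℝ)-1))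
      = (1-r)^(α-1) * ((1+r)^(n-1) : ℝ)⁻¹
        * (Real.sqrt π * Real.Gamma (((n:ℝ)-1)/2) / Real.Gamma ((n:ℝ)/2)) := by
    field_simp
    linear_combination ((2:ℝ)^(n-2:ℕ)) * hdup
      + (Real.Gamma ((n:ℝ)-1) * Real.sqrt π) * h2pow
  exact le_trans (le_of_eq hfinal) hmono
end

section
/- For any integer n ≥ 2 and any r with 0 ≤ r < 1, ∫₀^π sin^{n−2}(φ) / (1 − 2r cos φ + r²)^{n−1} dφ = 2^{n−2} Γ((n−1)/2)² / ((1−r²)^{n−1} Γ(n−1)). -/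
open Real
open intervalIntegral

theorem sinpow (m : ℕ) :
    ∫ x in (0:ℝ)..Real.pi, Real.sin x ^ m
      = Real.sqrt Real.pi * Real.Gamma (((m:ℝ)+1)/2) / Real.Gamma ((m:ℝ)/2 + 1) := by
  induction m using Nat.twoStepInduction with
  | zero =>
    simp only [pow_zero, integral_one, sub_zero, Nat.cast_zero, zero_add,
      zero_div, Real.Gamma_one, Real.Gamma_one_half_eq, div_one]
    rw [Real.mul_self_sqrt Real.pi_pos.le]
  | one =>
    have h32 : Real.Gamma ((1:ℝ)/2 + 1) = (1/2) * Real.Gamma (1/2) := Real.Gamma_add_one (by norm_num)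
    have h32' : Real.Gamma ((3:ℝ)/2) = Real.sqrt Real.pi / 2 := by
      rw [show (3:ℝ)/2 = 1/2 + 1 by norm_num, h32, Real.Gamma_one_half_eq]; ring
    norm_num [integral_sin, h32', Real.Gamma_one]
    rw [eq_div_iff (by positivity)]
    ring
  | more m ih _ =>
    rw [integral_sin_pow, ih]
    simp only [Real.sin_zero, Real.sin_pi, zero_pow (Nat.succ_ne_zero m), zero_mul, mul_zero]
    have h1 : Real.Gamma (((m:ℝ)+2+1)/2) = ((m:ℝ)+1)/2 * Real.Gamma (((m:ℝ)+1)/2) := by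
      rw [show ((m:ℝ)+2+1)/2 = ((m:ℝ)+1)/2 + 1 by ring, Real.Gamma_add_one (by positivity)]
    have h2 : Real.Gamma (((m:ℝ)+2)/2 + 1) = ((m:ℝ)/2+1) * Real.Gamma ((m:ℝ)/2 + 1) := by
      rw [show ((m:ℝ)+2)/2 + 1 = ((m:ℝ)/2 + 1) + 1 by ring, Real.Gamma_add_one (by positivity)]
    have hg : Real.Gamma ((m:ℝ)/2 + 1) ≠ 0 := (Real.Gamma_pos_of_pos (by positivity)).ne'
    push_cast [h1, h2]
    field_simp
    ring

theorem gammaid (k : ℕ) :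
    Real.sqrt Real.pi * Real.Gamma (((k:ℝ)+1)/2) / Real.Gamma ((k:ℝ)/2 + 1)
      = 2^k * Real.Gamma (((k:ℝ)+1)/2)^2 / Real.Gamma ((k:ℝ)+1) := by
  have ha := Real.Gamma_pos_of_pos (show (0:ℝ) < ((k:ℝ)+1)/2 by positivity)
  have hb := Real.Gamma_pos_of_pos (show (0:ℝ) < (k:ℝ)/2+1 by positivity)
  have hc := Real.Gamma_pos_of_pos (show (0:ℝ) < (k:ℝ)+1 by positivity)
  have hdup := Real.Gamma_mul_Gamma_add_half (((k:ℝ)+1)/2)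
  have h2 : (2:ℝ) ^ (1 - 2*(((k:ℝ)+1)/2)) = ((2:ℝ)^k)⁻¹ := by
    rw [show 1 - 2*(((k:ℝ)+1)/2) = -(k:ℝ) by ring, Real.rpow_neg (by norm_num),
      Real.rpow_natCast]
  rw [h2, show ((k:ℝ)+1)/2 + 1/2 = (k:ℝ)/2+1 by ring,
    show 2*(((k:ℝ)+1)/2) = (k:ℝ)+1 by ring] at hdup
  have hdup2 : 2^k * (Real.Gamma (((k:ℝ)+1)/2) * Real.Gamma ((k:ℝ)/2+1))
      = Real.Gamma ((k:ℝ)+1) * Real.sqrt Real.pi := by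
    rw [hdup]; field_simp
  rw [div_eq_div_iff hb.ne' hc.ne']
  linear_combination (-Real.Gamma (((k:ℝ)+1)/2)) * hdup2

/-- In the limit case `α = 2 - n`, the spherical integral of the Poisson kernel
is computed exactly. -/
theorem stmt_2 (n : ℕ) (hn : 2 ≤ n) (r : ℝ) (hr0 : 0 ≤ r) (hr1 : r < 1) :
    ∫ φ in (0:ℝ)..Real.pi,
        Real.sin φ ^ (n - 2) / (1 - 2 * r * Real.cos φ + r ^ 2) ^ (n - 1)
      = 2 ^ (n - 2) * Real.Gamma (((n : ℝ) - 1) / 2) ^ 2 /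
          ((1 - r ^ 2) ^ (n - 1) * Real.Gamma ((n : ℝ) - 1)) := by
  obtain ⟨k, rfl⟩ : ∃ k, n = k + 2 := ⟨n - 2, by omega⟩
  have hk2 : k + 2 - 2 = k := by omega
  have hk1 : k + 2 - 1 = k + 1 := by omega
  have hcast : ((k+2:ℕ):ℝ) - 1 = (k:ℝ) + 1 := by push_cast; ring
  rw [hk2, hk1, hcast]
  have hr2 : (0:ℝ) < 1 - r^2 := by nlinarith
  set D : ℝ → ℝ := fun φ => 1 - 2*r*Real.cos φ + r^2 with hDdef
  have hDpos : ∀ φ, 0 < D φ := by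
    intro φ
    have h1 := Real.cos_le_one φ
    have h2 := Real.neg_one_le_cos φ
    simp only [hDdef]
    nlinarith
  set u : ℝ → ℝ := fun φ => ((1+r^2)*Real.cos φ - 2*r) / D φ with hudef
  set w : ℝ → ℝ := fun φ => Real.arccos (u φ) with hwdef
  have hkey2 : ∀ φ, (D φ)^2 - ((1+r^2)*Real.cos φ - 2*r)^2 = ((1-r^2) * Real.sin φ)^2 := by
    intro φ
    simp only [hDdef]
    linear_combination (-(1-r^2)^2) * Real.sin_sq_add_cos_sq φ
  have hkey : ∀ φ, 1 - u φ ^ 2 = ((1-r^2) * Real.sin φ / D φ)^2 := by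
    intro φ
    have hD := (hDpos φ).ne'
    rw [hudef]
    simp only
    rw [div_pow, div_pow, eq_div_iff (pow_ne_zero 2 hD), sub_mul, one_mul,
      div_mul_cancel₀ _ (pow_ne_zero 2 hD)]
    linarith [hkey2 φ]
  have hsin_w : ∀ φ ∈ Set.uIcc (0:ℝ) Real.pi,
      Real.sin (w φ) = (1-r^2) * Real.sin φ / D φ := by
    intro φ hφ
    rw [Set.uIcc_of_le Real.pi_pos.le] at hφ
    have hs : 0 ≤ Real.sin φ := Real.sin_nonneg_of_nonneg_of_le_pi hφ.1 hφ.2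
    rw [hwdef]
    simp only
    rw [Real.sin_arccos, hkey φ, Real.sqrt_sq
      (div_nonneg (mul_nonneg hr2.le hs) (hDpos φ).le)]
  have hu0 : u 0 = 1 := by
    simp only [hudef, hDdef, Real.cos_zero]
    rw [div_eq_one_iff_eq (by nlinarith : (1:ℝ) - 2*r*1 + r^2 ≠ 0)]
    ring
  have hupi : u Real.pi = -1 := by
    simp only [hudef, hDdef, Real.cos_pi]
    rw [div_eq_iff (by nlinarith : (1:ℝ) - 2*r*(-1) + r^2 ≠ 0)]
    ring
  have hw0 : w 0 = 0 := by rw [hwdef]; simp only [hu0, Real.arccos_one]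
  have hwpi : w Real.pi = Real.pi := by rw [hwdef]; simp only [hupi, Real.arccos_neg_one]
  have hderiv : ∀ φ ∈ Set.Ioo (0:ℝ) Real.pi, HasDerivAt w ((1-r^2)/D φ) φ := by
    intro φ hφ
    have hs : 0 < Real.sin φ := Real.sin_pos_of_pos_of_lt_pi hφ.1 hφ.2
    have hD := hDpos φ
    have h1 : HasDerivAt (fun x => (1+r^2)*Real.cos x - 2*r) (-((1+r^2) * Real.sin φ)) φ := by
      simpa [mul_comm, mul_assoc] using
        (((Real.hasDerivAt_cos φ).const_mul (1+r^2)).sub_const (2*r))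
    have h2 : HasDerivAt D (2*r*Real.sin φ) φ := by
      have := (((Real.hasDerivAt_cos φ).const_mul (2*r)).const_sub 1).add_const (r^2)
      refine this.congr_deriv ?_
      ring
    have hu : HasDerivAt u (-(Real.sin φ) * (1-r^2)^2 / (D φ)^2) φ := by
      have := h1.div h2 hD.ne'
      refine this.congr_deriv ?_
      symm
      rw [hDdef]
      simp only
      rw [div_eq_div_iff (pow_ne_zero 2 hD.ne') (pow_ne_zero 2 hD.ne')]
      ring
    have hpos : 0 < 1 - u φ ^ 2 := by
      rw [hkey φ]
      positivity
    have hne1 : u φ ≠ 1 := by intro e; rw [e] at hpos; norm_num at hpos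
    have hnem1 : u φ ≠ -1 := by intro e; rw [e] at hpos; norm_num at hpos
    have harc := (Real.hasDerivAt_arccos hnem1 hne1).comp φ hu
    have hsqrt : Real.sqrt (1 - u φ ^ 2) = (1-r^2) * Real.sin φ / D φ := by
      rw [hkey φ, Real.sqrt_sq (div_nonneg (mul_nonneg hr2.le hs.le) hD.le)]
    refine harc.congr_deriv ?_
    symm
    rw [hsqrt]
    field_simp
  have hucont : Continuous u := by
    apply Continuous.div (by fun_prop) (by fun_prop) (fun φ => (hDpos φ).ne')
  have hwcont : Continuous w := Real.continuous_arccos.comp hucont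
  have hw'cont : Continuous (fun φ => (1-r^2)/D φ) :=
    Continuous.div continuous_const (by fun_prop) (fun φ => (hDpos φ).ne')
  have hsub : (∫ φ in (0:ℝ)..Real.pi,
        ((fun ψ => Real.sin ψ ^ k) ∘ w) φ * ((1-r^2)/D φ))
      = ∫ ψ in (w 0)..(w Real.pi), Real.sin ψ ^ k := by
    apply intervalIntegral.integral_comp_mul_deriv'' hwcont.continuousOn
    · intro x hx
      rw [min_eq_left Real.pi_pos.le, max_eq_right Real.pi_pos.le] at hx
      exact (hderiv x hx).hasDerivWithinAt
    · exact hw'cont.continuousOn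
    · exact (Continuous.pow Real.continuous_sin k).continuousOn
  have hcongr : Set.EqOn
      (fun φ => Real.sin φ ^ k / D φ ^ (k+1))
      (fun φ => (1/(1-r^2)^(k+1)) *
        (((fun ψ => Real.sin ψ ^ k) ∘ w) φ * ((1-r^2)/D φ)))
      (Set.uIcc (0:ℝ) Real.pi) := by
    intro φ hφ
    simp only [Function.comp_apply]
    rw [hsin_w φ hφ, div_pow, mul_pow]
    have hD := (hDpos φ).ne'
    field_simp
    ring
  calc ∫ φ in (0:ℝ)..Real.pi, Real.sin φ ^ k / D φ ^ (k+1)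
      = ∫ φ in (0:ℝ)..Real.pi, (1/(1-r^2)^(k+1)) *
          (((fun ψ => Real.sin ψ ^ k) ∘ w) φ * ((1-r^2)/D φ)) :=
        intervalIntegral.integral_congr hcongr
    _ = (1/(1-r^2)^(k+1)) * ∫ φ in (0:ℝ)..Real.pi,
          (((fun ψ => Real.sin ψ ^ k) ∘ w) φ * ((1-r^2)/D φ)) :=
        intervalIntegral.integral_const_mul _ _
    _ = (1/(1-r^2)^(k+1)) *
          (Real.sqrt Real.pi * Real.Gamma (((k:ℝ)+1)/2) / Real.Gamma ((k:ℝ)/2 + 1)) := by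
        rw [hsub, hw0, hwpi, sinpow]
    _ = 2 ^ k * Real.Gamma (((k:ℝ) + 1) / 2) ^ 2 /
          ((1 - r ^ 2) ^ (k+1) * Real.Gamma ((k:ℝ) + 1)) := by
        rw [gammaid]
        have hc := (Real.Gamma_pos_of_pos (show (0:ℝ) < (k:ℝ)+1 by positivity)).ne'
        field_simp
end

section
/- Let n ≥ 2, 2−n ≤ α < 1, and for y in the upper half space R^n_+ and w ∈ R^{n−1} define p_α(y,w) = c_{n,α} y_n^{1−α}/|y−(w,0)|^{n−α}, and for x ∈ B^n, ξ ∈ S^{n−1} define p̃_α(x,ξ) = 2^{α−1} c_{n,α} (1−|x|²)^{1−α}/|x−ξ|^{n−α}. Then p̃_α(Ψ(y), Ψ(w)) = p_α(y,w) · |Ψ′(y)|^{(2−n−α)/2} · |Ψ′(w)|^{(α−n)/2}, where |Ψ′(y)| = 2/(1+2y_n+|y|²) and |Ψ′(w)| = 2/(1+|w|²). -/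
open Real in
/-- Pure `rpow` identity underlying the Poisson-kernel transformation rule. -/
lemma aux8_stmt8 (A B D t c α e : ℝ) (hA : 0 < A) (hB : 0 < B) (hD : 0 < D) (ht : 0 < t)
    (hc : 0 < c) :
    (2:ℝ)^(α-1)*c*(4*t/A)^(1-α)/((4*D/(A*B))^e)
      = c*t^(1-α)/D^e*(2/A)^(1-α-e)*(2/B)^(-e) := by
  have h2 : (0:ℝ) < 2 := two_pos
  have l1 : log (4*t/A) = 2*log 2 + log t - log A := by
    rw [Real.log_div (by positivity) hA.ne', Real.log_mul (by positivity) ht.ne',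
      show (4:ℝ)=2*2 by norm_num, Real.log_mul two_ne_zero two_ne_zero]; ring
  have l2 : log (4*D/(A*B)) = 2*log 2 + log D - log A - log B := by
    rw [Real.log_div (by positivity) (by positivity), Real.log_mul (by positivity) hD.ne',
      Real.log_mul hA.ne' hB.ne',
      show (4:ℝ)=2*2 by norm_num, Real.log_mul two_ne_zero two_ne_zero]; ring
  have l3 : log (2/A) = log 2 - log A := Real.log_div two_ne_zero hA.ne'
  have l4 : log (2/B) = log 2 - log B := Real.log_div two_ne_zero hB.ne'
  apply Real.log_injOn_pos (Set.mem_Ioi.mpr (by positivity)) (Set.mem_Ioi.mpr (by positivity))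
  rw [Real.log_div (by positivity) (by positivity),
    Real.log_mul (by positivity) (by positivity),
    Real.log_mul (by positivity) (by positivity),
    Real.log_rpow h2, Real.log_rpow (show (0:ℝ) < 4*t/A by positivity),
    Real.log_rpow (show (0:ℝ) < 4*D/(A*B) by positivity), l1, l2,
    Real.log_mul (by positivity) (by positivity),
    Real.log_mul (by positivity) (by positivity),
    Real.log_div (by positivity) (by positivity),
    Real.log_mul (by positivity) (by positivity),
    Real.log_rpow ht, Real.log_rpow hD,
    Real.log_rpow (show (0:ℝ) < 2/A by positivity),
    Real.log_rpow (show (0:ℝ) < 2/B by positivity), l3, l4]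
  ring

/-- Transformation rule of the Poisson kernel under the conformal map `Ψ` from the upper
half space to the unit ball:
`p̃_α(Ψ(y), Ψ(w)) = p_α(y,w) · |Ψ'(y)|^{(2-n-α)/2} · |Ψ'(w)|^{(α-n)/2}`. -/
theorem stmt_8 (n : ℕ) (hn : 2 ≤ n) (α : ℝ) (hα1 : 2 - (n : ℝ) ≤ α) (hα2 : α < 1)
    (c : ℝ) (hc : 0 < c) (y' w : EuclideanSpace ℝ (Fin (n - 1))) (t : ℝ) (ht : 0 < t) :
    (2 : ℝ) ^ (α - 1) * c *
        (1 - (‖(2 / (1 + 2 * t + (‖y'‖ ^ 2 + t ^ 2))) • y'‖ ^ 2 +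
            ((-1 + (‖y'‖ ^ 2 + t ^ 2)) / (1 + 2 * t + (‖y'‖ ^ 2 + t ^ 2))) ^ 2)) ^ (1 - α) /
        ((‖(2 / (1 + 2 * t + (‖y'‖ ^ 2 + t ^ 2))) • y' - (2 / (1 + ‖w‖ ^ 2)) • w‖ ^ 2 +
            ((-1 + (‖y'‖ ^ 2 + t ^ 2)) / (1 + 2 * t + (‖y'‖ ^ 2 + t ^ 2)) -
              (-1 + ‖w‖ ^ 2) / (1 + ‖w‖ ^ 2)) ^ 2) ^ (((n : ℝ) - α) / 2))
      = c * t ^ (1 - α) / ((‖y' - w‖ ^ 2 + t ^ 2) ^ (((n : ℝ) - α) / 2)) *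
          (2 / (1 + 2 * t + (‖y'‖ ^ 2 + t ^ 2))) ^ ((2 - (n : ℝ) - α) / 2) *
          (2 / (1 + ‖w‖ ^ 2)) ^ ((α - (n : ℝ)) / 2) := by
  have hA : (0:ℝ) < 1 + 2 * t + (‖y'‖ ^ 2 + t ^ 2) := by positivity
  have hB : (0:ℝ) < 1 + ‖w‖ ^ 2 := by positivity
  have hD : (0:ℝ) < ‖y' - w‖ ^ 2 + t ^ 2 := by positivity
  have hyw : ‖y' - w‖ ^ 2 = ‖y'‖ ^ 2 - 2 * (inner ℝ y' w : ℝ) + ‖w‖ ^ 2 := by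
    rw [@norm_sub_sq_real]
  have hsmul1 : ‖(2 / (1 + 2 * t + (‖y'‖ ^ 2 + t ^ 2))) • y'‖ ^ 2
      = (2 / (1 + 2 * t + (‖y'‖ ^ 2 + t ^ 2)))^2 * ‖y'‖^2 := by
    rw [norm_smul, Real.norm_eq_abs, abs_of_pos (by positivity)]; ring
  have hsmul2 : ‖(2 / (1 + 2 * t + (‖y'‖ ^ 2 + t ^ 2))) • y' - (2 / (1 + ‖w‖ ^ 2)) • w‖ ^ 2
      = (2 / (1 + 2 * t + (‖y'‖ ^ 2 + t ^ 2)))^2*‖y'‖^2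
        - 2*(2 / (1 + 2 * t + (‖y'‖ ^ 2 + t ^ 2)))*(2 / (1 + ‖w‖ ^ 2))*(inner ℝ y' w : ℝ)
        + (2 / (1 + ‖w‖ ^ 2))^2*‖w‖^2 := by
    rw [@norm_sub_sq_real, real_inner_smul_left, real_inner_smul_right, norm_smul, norm_smul,
      Real.norm_eq_abs, Real.norm_eq_abs, abs_of_pos (by positivity), abs_of_pos (by positivity)]
    ring
  have h1 : 1 - (‖(2 / (1 + 2 * t + (‖y'‖ ^ 2 + t ^ 2))) • y'‖ ^ 2 +
      ((-1 + (‖y'‖ ^ 2 + t ^ 2)) / (1 + 2 * t + (‖y'‖ ^ 2 + t ^ 2))) ^ 2)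
      = 4*t/(1 + 2 * t + (‖y'‖ ^ 2 + t ^ 2)) := by
    rw [hsmul1]; field_simp; ring
  have h2 : ‖(2 / (1 + 2 * t + (‖y'‖ ^ 2 + t ^ 2))) • y' - (2 / (1 + ‖w‖ ^ 2)) • w‖ ^ 2 +
      ((-1 + (‖y'‖ ^ 2 + t ^ 2)) / (1 + 2 * t + (‖y'‖ ^ 2 + t ^ 2)) -
        (-1 + ‖w‖ ^ 2) / (1 + ‖w‖ ^ 2)) ^ 2
      = 4*(‖y' - w‖ ^ 2 + t ^ 2)/((1 + 2 * t + (‖y'‖ ^ 2 + t ^ 2))*(1 + ‖w‖ ^ 2)) := by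
    rw [hsmul2, hyw]; field_simp; ring
  rw [h1, h2,
    show (2 - (n : ℝ) - α) / 2 = 1 - α - ((n : ℝ) - α) / 2 by ring,
    show (α - (n : ℝ)) / 2 = -(((n : ℝ) - α) / 2) by ring]
  exact aux8_stmt8 _ _ _ _ _ _ _ hA hB hD ht hc
end

section
/- For any integer k ≥ 2 and any r with 0 ≤ r < 1, ∫₀^π sin^{k−1}(φ)/(1 − 2r cos φ + r²)^{k+1} dφ = (2^{k−1} Γ(k/2)²/Γ(k)) · (1+r²)/(1−r²)^{k+2}. -/
open Real intervalIntegral Set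

lemma sin_pow_integral (n : ℕ) :
    ∫ x in (0:ℝ)..π, sin x ^ n
      = 2 ^ n * Real.Gamma (((n:ℝ) + 1) / 2) ^ 2 / Real.Gamma ((n:ℝ) + 1) := by
  induction n using Nat.twoStepInduction with
  | zero =>
    rw [show (((0:ℕ):ℝ) + 1)/2 = 1/2 by norm_num, Real.Gamma_one_half_eq,
      show ((0:ℕ):ℝ) + 1 = 1 by norm_num, Real.Gamma_one, sq_sqrt pi_pos.le]
    simp
  | one =>
    have h2 : Real.Gamma 2 = 1 := by
      rw [show (2:ℝ) = (1:ℕ) + 1 by norm_num, Real.Gamma_nat_eq_factorial]; simp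
    simp [Real.Gamma_one, h2]
    norm_num
  | more n ih _ =>
    rw [integral_sin_pow n, ih]
    have hpos : 0 < ((n:ℝ) + 1) / 2 := by positivity
    have hG : Real.Gamma (((n:ℝ) + 2 + 1) / 2) = ((n:ℝ)+1)/2 * Real.Gamma (((n:ℝ)+1)/2) := by
      rw [show ((n:ℝ) + 2 + 1) / 2 = ((n:ℝ)+1)/2 + 1 by ring, Real.Gamma_add_one (ne_of_gt hpos)]
    have hG2 : Real.Gamma ((n:ℝ) + 2 + 1) = ((n:ℝ)+2) * (((n:ℝ)+1) * Real.Gamma ((n:ℝ)+1)) := by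
      rw [show (n:ℝ) + 2 + 1 = ((n:ℝ)+2) + 1 by ring, Real.Gamma_add_one (by positivity),
        show (n:ℝ) + 2 = ((n:ℝ)+1) + 1 by ring, Real.Gamma_add_one (by positivity)]
    have hGpos : 0 < Real.Gamma (((n:ℝ)+1)/2) := Real.Gamma_pos_of_pos hpos
    have hGpos2 : 0 < Real.Gamma ((n:ℝ)+1) := Real.Gamma_pos_of_pos (by positivity)
    push_cast
    rw [hG, hG2]
    simp only [sin_zero, sin_pi]
    field_simp
    ring

lemma key_alg (m : ℕ) (x s E : ℝ) (hx : x ≠ 0) (hE : E ≠ 0) :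
    x / E * ((s * x / E) ^ (m+1) / (x^2 / E) ^ (m+3)) = s^(m+1) * E / x^(m+4) := by
  rw [div_pow, div_pow, div_div_div_eq, div_mul_div_comm, div_eq_div_iff (by simp [hx, hE]) (by simp [hx])]
  ring

set_option maxHeartbeats 1000000 in
theorem stmt_12 (k : ℕ) (hk : 2 ≤ k) (r : ℝ) (hr0 : 0 ≤ r) (hr1 : r < 1) :
    ∫ φ in (0:ℝ)..Real.pi,
        Real.sin φ ^ (k - 1) / (1 - 2 * r * Real.cos φ + r ^ 2) ^ (k + 1)
      = (2 ^ (k - 1) * Real.Gamma ((k : ℝ) / 2) ^ 2 / Real.Gamma (k : ℝ)) *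
          ((1 + r ^ 2) / (1 - r ^ 2) ^ (k + 2)) := by
  obtain ⟨m, rfl⟩ : ∃ m, k = m + 2 := ⟨k - 2, by omega⟩
  rw [show m + 2 - 1 = m + 1 from rfl, show m + 2 + 1 = m + 3 by omega,
    show m + 2 + 2 = m + 4 by omega]
  have h1r2 : (0:ℝ) < 1 + r^2 := by positivity
  have hrr : (0:ℝ) < 1 - r^2 := by nlinarith
  have hE : ∀ ψ : ℝ, 0 < 1 + r^2 + 2*r*cos ψ := by
    intro ψ
    nlinarith [neg_one_le_cos ψ, sq_nonneg (1-r)]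
  set u : ℝ → ℝ := fun ψ => (cos ψ * (1+r^2) + 2*r)/(1 + r^2 + 2*r*cos ψ) with hu
  set g : ℝ → ℝ := fun ψ => arccos (u ψ) with hg
  set F : ℝ → ℝ := fun φ => sin φ ^ (m+1) / (1 - 2*r*cos φ + r^2)^(m+3) with hF
  have hDpos : ∀ φ : ℝ, 0 < 1 - 2*r*cos φ + r^2 := by
    intro φ
    nlinarith [cos_le_one φ, sq_nonneg (1-r)]
  have hFcont : Continuous F := by
    apply Continuous.div (by fun_prop) (by fun_prop)
    intro φ; exact pow_ne_zero _ (hDpos φ).ne'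
  have hucont : Continuous u := by
    apply Continuous.div (by fun_prop) (by fun_prop)
    intro ψ; exact (hE ψ).ne'
  have hgcont : Continuous g := Real.continuous_arccos.comp hucont
  have hu_le : ∀ ψ : ℝ, u ψ ≤ 1 := by
    intro ψ
    rw [hu, div_le_one (hE ψ)]
    nlinarith [mul_nonneg (sub_nonneg.2 (cos_le_one ψ)) (sq_nonneg (1-r))]
  have hu_ge : ∀ ψ : ℝ, -1 ≤ u ψ := by
    intro ψ
    rw [hu, le_div_iff₀ (hE ψ)]
    nlinarith [mul_nonneg (by nlinarith [neg_one_le_cos ψ] : (0:ℝ) ≤ cos ψ + 1) (sq_nonneg (1+r))]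
  have hg0 : g 0 = 0 := by
    have h1 : u 0 = 1 := by
      rw [hu]
      rw [div_eq_one_iff_eq (hE 0).ne']
      simp [cos_zero]
    rw [hg]; simp only [h1, arccos_one]
  have hgπ : g π = π := by
    have h1 : u π = -1 := by
      rw [hu]
      rw [div_eq_iff (hE π).ne']
      simp [cos_pi]; ring
    rw [hg]; simp only [h1, arccos_neg_one]
  -- 1 - u^2
  have husq : ∀ ψ : ℝ, 1 - (u ψ)^2 = (sin ψ * (1-r^2) / (1 + r^2 + 2*r*cos ψ))^2 := by
    intro ψ
    rw [hu]
    have hd := (hE ψ).ne'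
    rw [div_pow, div_pow, sub_eq_iff_eq_add, ← add_div, eq_div_iff (pow_ne_zero 2 hd)]
    linear_combination (-(1-r^2)^2) * (sin_sq_add_cos_sq ψ)
  have hsin_g : ∀ ψ ∈ Icc (0:ℝ) π, sin (g ψ) = sin ψ * (1-r^2) / (1 + r^2 + 2*r*cos ψ) := by
    intro ψ hψ
    have hs : 0 ≤ sin ψ := sin_nonneg_of_nonneg_of_le_pi hψ.1 hψ.2
    rw [hg, Real.sin_arccos, husq ψ,
      Real.sqrt_sq (div_nonneg (mul_nonneg hs hrr.le) (hE ψ).le)]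
  have hcos_g : ∀ ψ : ℝ, cos (g ψ) = u ψ := by
    intro ψ
    rw [hg]; exact Real.cos_arccos (hu_ge ψ) (hu_le ψ)
  have hker : ∀ ψ : ℝ, 1 - 2*r*cos (g ψ) + r^2 = (1-r^2)^2/(1 + r^2 + 2*r*cos ψ) := by
    intro ψ
    rw [hcos_g, hu]
    have hd := (hE ψ).ne'
    field_simp
    ring
  -- derivative of g
  have hderiv : ∀ ψ ∈ Ioo (0:ℝ) π,
      HasDerivAt g ((1-r^2) / (1 + r^2 + 2*r*cos ψ)) ψ := by
    intro ψ hψ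
    have hsψ : 0 < sin ψ := sin_pos_of_pos_of_lt_pi hψ.1 hψ.2
    have hd := hE ψ
    have hu' : HasDerivAt u (-sin ψ * (1-r^2)^2 / (1 + r^2 + 2*r*cos ψ)^2) ψ := by
      have h1 : HasDerivAt (fun ψ : ℝ => cos ψ * (1+r^2) + 2*r) (-sin ψ * (1+r^2)) ψ :=
        ((hasDerivAt_cos ψ).mul_const (1+r^2)).add_const (2*r)
      have h2 : HasDerivAt (fun ψ : ℝ => 1 + r^2 + 2*r*cos ψ) (2*r*(-sin ψ)) ψ :=
        ((hasDerivAt_cos ψ).const_mul (2*r)).const_add (1+r^2)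
      have h3 := h1.div h2 hd.ne'
      refine h3.congr_deriv ?_
      ring
    have hc1 : cos ψ < 1 := by
      nlinarith [sin_sq_add_cos_sq ψ, mul_pos hsψ hsψ, neg_one_le_cos ψ, cos_le_one ψ]
    have hc2 : -1 < cos ψ := by
      nlinarith [sin_sq_add_cos_sq ψ, mul_pos hsψ hsψ, neg_one_le_cos ψ, cos_le_one ψ]
    have hr2pos : (0:ℝ) < (1-r)^2 := pow_pos (by linarith) 2
    have hr2pos' : (0:ℝ) < (1+r)^2 := pow_pos (by linarith) 2
    have hune1 : u ψ ≠ 1 := by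
      rw [hu]; intro h
      rw [div_eq_one_iff_eq hd.ne'] at h
      nlinarith [mul_pos (show (0:ℝ) < 1 - cos ψ by linarith) hr2pos]
    have hune2 : u ψ ≠ -1 := by
      rw [hu]; intro h
      rw [div_eq_iff hd.ne'] at h
      nlinarith [mul_pos (show (0:ℝ) < 1 + cos ψ by linarith) hr2pos']
    have harc := (Real.hasDerivAt_arccos hune2 hune1).comp ψ hu'
    refine harc.congr_deriv ?_
    rw [husq ψ, Real.sqrt_sq (by positivity)]
    field_simp
  -- change of variables
  have hsubst : (∫ ψ in (0:ℝ)..π, ((1-r^2) / (1 + r^2 + 2*r*cos ψ)) • (F ∘ g) ψ)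
      = ∫ φ in (g 0)..(g π), F φ := by
    apply intervalIntegral.integral_comp_smul_deriv'' (f := g)
      (f' := fun ψ => (1-r^2) / (1 + r^2 + 2*r*cos ψ))
    · exact hgcont.continuousOn
    · intro x hx
      rw [min_eq_left pi_pos.le, max_eq_right pi_pos.le] at hx
      exact (hderiv x hx).hasDerivWithinAt
    · apply ContinuousOn.div continuousOn_const (by fun_prop)
      intro ψ _; exact (hE ψ).ne'
    · exact hFcont.continuousOn
  rw [hg0, hgπ] at hsubst
  have hLHS : (∫ φ in (0:ℝ)..π, sin φ ^ (m+1) / (1 - 2*r*cos φ + r^2)^(m+3))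
      = ∫ ψ in (0:ℝ)..π, ((1-r^2) / (1 + r^2 + 2*r*cos ψ)) • (F ∘ g) ψ := by
    rw [hsubst]
  rw [hLHS]
  -- pointwise simplification
  have hpt : ∀ ψ ∈ uIcc (0:ℝ) π,
      ((1-r^2) / (1 + r^2 + 2*r*cos ψ)) • (F ∘ g) ψ
        = ((1+r^2)/(1-r^2)^(m+4)) * (sin ψ ^ (m+1))
          + ((2*r)/(1-r^2)^(m+4)) * (sin ψ ^ (m+1) * cos ψ) := by
    intro ψ hψ
    rw [uIcc_of_le pi_pos.le] at hψ
    have hd := hE ψ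
    rw [smul_eq_mul, Function.comp_apply, hF]
    simp only
    rw [hsin_g ψ hψ, hker ψ]
    rw [key_alg m (1-r^2) (sin ψ) (1+r^2+2*r*cos ψ) hrr.ne' (hE ψ).ne']
    field_simp
  rw [intervalIntegral.integral_congr hpt]
  have hint1 : IntervalIntegrable (fun ψ : ℝ => ((1+r^2)/(1-r^2)^(m+4)) * (sin ψ ^ (m+1)))
      MeasureTheory.volume 0 π := (Continuous.intervalIntegrable (by fun_prop) 0 π)
  have hint2 : IntervalIntegrable (fun ψ : ℝ => ((2*r)/(1-r^2)^(m+4)) * (sin ψ ^ (m+1) * cos ψ))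
      MeasureTheory.volume 0 π := (Continuous.intervalIntegrable (by fun_prop) 0 π)
  rw [intervalIntegral.integral_add hint1 hint2, intervalIntegral.integral_const_mul,
    intervalIntegral.integral_const_mul]
  have hzero : (∫ ψ in (0:ℝ)..π, sin ψ ^ (m+1) * cos ψ) = 0 := by
    have h := integral_sin_pow_mul_cos_pow_odd (a := 0) (b := π) (m+1) 0
    simpa using h
  rw [hzero, sin_pow_integral (m+1)]
  have hGpos : 0 < Real.Gamma (((m:ℝ)+2)/2) := Real.Gamma_pos_of_pos (by positivity)
  have hGpos2 : 0 < Real.Gamma ((m:ℝ)+2) := Real.Gamma_pos_of_pos (by positivity)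
  push_cast
  ring
end

section
/- Let n ≥ 2 and define Ĩ_n: B^n → R for even n by Ĩ_n(x) = Σ_{k=1}^{n/2−1} (1/(2k)) · (Γ((n−2)/2) Γ(n−k−1))/(Γ(n−2) Γ(n/2−k)) · (1−|x|²)^k. Then Ĩ_n, viewed as a radial function Ĩ_n(r) of r = |x|, satisfies the second-order ODE ((1−r²)/2)² Ĩ_n″(r) + ((1−r²)/2)² ((n−1)/r) Ĩ_n′(r) + ((n−2) r (1−r²)/2) Ĩ_n′(r) = −(n−2)(1−r²)/2 for 0 < r < 1. -/
open Finset

noncomputable def cf (n k : ℕ) : ℝ :=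
  (1 / (2 * (k : ℝ))) *
    (Real.Gamma (((n : ℝ) - 2) / 2) * Real.Gamma ((n : ℝ) - (k : ℝ) - 1)) /
    (Real.Gamma ((n : ℝ) - 2) * Real.Gamma ((n : ℝ) / 2 - (k : ℝ)))

noncomputable def tf (n : ℕ) (r : ℝ) (k : ℕ) : ℝ :=
  cf n k * (k : ℝ) * ((k : ℝ) + 1 - (n : ℝ)) * (1 - r ^ 2) ^ k

lemma hasDerivAt_osq (j : ℕ) (r : ℝ) :
    HasDerivAt (fun x : ℝ => (1 - x ^ 2) ^ j)
      ((j : ℝ) * (1 - r ^ 2) ^ (j - 1) * (-2 * r)) r := by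
  have h : HasDerivAt (fun x : ℝ => 1 - x ^ 2) (-2 * r) r := by
    simpa using ((hasDerivAt_pow 2 r).const_sub 1)
  exact h.pow j

lemma hasDeriv1 (s : Finset ℕ) (c : ℕ → ℝ) (y : ℝ) :
    HasDerivAt (fun x : ℝ => ∑ k ∈ s, c k * (1 - x ^ 2) ^ k)
      (∑ k ∈ s, c k * ((k : ℝ) * (1 - y ^ 2) ^ (k - 1) * (-2 * y))) y :=
  HasDerivAt.fun_sum fun k _ => HasDerivAt.const_mul (c k) (hasDerivAt_osq k y)

lemma hasDeriv2 (s : Finset ℕ) (c : ℕ → ℝ) (y : ℝ) :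
    HasDerivAt (fun x : ℝ => ∑ k ∈ s, c k * ((k : ℝ) * (1 - x ^ 2) ^ (k - 1) * (-2 * x)))
      (∑ k ∈ s, (c k * (k : ℝ) * (-2)) *
        ((((k - 1 : ℕ) : ℝ) * (1 - y ^ 2) ^ (k - 1 - 1) * (-2 * y)) * y
          + (1 - y ^ 2) ^ (k - 1) * 1)) y := by
  have he : (fun x : ℝ => ∑ k ∈ s, c k * ((k : ℝ) * (1 - x ^ 2) ^ (k - 1) * (-2 * x)))
      = fun x : ℝ => ∑ k ∈ s, (c k * (k : ℝ) * (-2)) * ((1 - x ^ 2) ^ (k - 1) * x) := by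
    funext x; exact Finset.sum_congr rfl fun k _ => by ring
  rw [he]
  exact HasDerivAt.fun_sum fun k _ =>
    HasDerivAt.const_mul _ ((hasDerivAt_osq (k - 1) y).mul (hasDerivAt_id' y))

lemma tel (f : ℕ → ℝ) (N : ℕ) :
    ∑ k ∈ Icc 1 N, (f k - f (k + 1)) = f 1 - f (N + 1) := by
  induction N with
  | zero => simp
  | succ n ih => rw [Finset.sum_Icc_succ_top (by omega : 1 ≤ n + 1), ih]; ring

lemma cf_rec (n m k : ℕ) (hnm : n = 2 * m) (hm : 2 ≤ m) (hk1 : 1 ≤ k) (hk : k ≤ m - 1) :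
    cf n (k + 1) * ((k : ℝ) + 1) * ((k : ℝ) + 2 - (n : ℝ)) =
      -(cf n k * (k : ℝ) * ((n : ℝ) / 2 - (k : ℝ) - 1)) := by
  have hnr : (n : ℝ) = 2 * (m : ℝ) := by push_cast [hnm]; ring
  rcases eq_or_lt_of_le hk with hkm | hkm
  · have hk' : (k : ℝ) = (m : ℝ) - 1 := by
      have h : (k : ℕ) + 1 = m := by omega
      have h2 := congrArg (fun t : ℕ => (t : ℝ)) h
      push_cast at h2; linarith
    have h1 : (n : ℝ) / 2 - (k : ℝ) - 1 = 0 := by rw [hnr, hk']; ring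
    have h2 : (n : ℝ) / 2 - ((k : ℝ) + 1) = 0 := by rw [hnr, hk']; ring
    have hcf : cf n (k + 1) = 0 := by
      unfold cf
      push_cast
      rw [h2, Real.Gamma_zero, mul_zero, div_zero]
    rw [hcf, h1]; ring
  · have hkr : (k : ℝ) ≤ (m : ℝ) - 2 := by
      have h : k + 2 ≤ m := by omega
      have h2 := (Nat.cast_le (α := ℝ)).mpr h
      push_cast at h2; linarith
    have hpos1 : (0:ℝ) < (n : ℝ) - (k:ℝ) - 2 := by rw [hnr]; linarith
    have hd2 : (n:ℝ)/2 - (k:ℝ) - 1 ≠ 0 := by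
      rw [hnr]; intro h; rw [mul_comm, mul_div_assoc] at h; norm_num at h; linarith
    have hG1 : Real.Gamma ((n:ℝ) - (k:ℝ) - 1) = ((n:ℝ) - (k:ℝ) - 2) * Real.Gamma ((n:ℝ) - (k:ℝ) - 2) := by
      have h := Real.Gamma_add_one hpos1.ne'
      rw [show (n:ℝ) - (k:ℝ) - 2 + 1 = (n:ℝ) - (k:ℝ) - 1 by ring] at h
      exact h
    have hG2 : Real.Gamma ((n:ℝ)/2 - (k:ℝ)) = ((n:ℝ)/2 - (k:ℝ) - 1) * Real.Gamma ((n:ℝ)/2 - (k:ℝ) - 1) := by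
      have h := Real.Gamma_add_one hd2
      rw [show (n:ℝ)/2 - (k:ℝ) - 1 + 1 = (n:ℝ)/2 - (k:ℝ) by ring] at h
      exact h
    have hGn2 : Real.Gamma ((n:ℝ) - 2) ≠ 0 := by
      refine (Real.Gamma_pos_of_pos ?_).ne'
      have : (2:ℝ) ≤ (m:ℝ) := by exact_mod_cast hm
      rw [hnr]; linarith
    have hGmk : Real.Gamma ((n:ℝ)/2 - (k:ℝ) - 1) ≠ 0 := by
      refine (Real.Gamma_pos_of_pos ?_).ne'
      rw [hnr]; rw [mul_comm, mul_div_assoc]; norm_num; linarith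
    have hkne : (k : ℝ) ≠ 0 := by positivity
    have hk1ne : (k : ℝ) + 1 ≠ 0 := by positivity
    unfold cf
    push_cast
    rw [show (n:ℝ) - ((k:ℝ)+1) - 1 = (n:ℝ) - (k:ℝ) - 2 by ring,
      show (n:ℝ)/2 - ((k:ℝ)+1) = (n:ℝ)/2 - (k:ℝ) - 1 by ring, hG1, hG2]
    generalize Real.Gamma (((n:ℝ) - 2)/2) = A
    generalize Real.Gamma ((n:ℝ) - (k:ℝ) - 2) = B
    generalize hC : Real.Gamma ((n:ℝ) - 2) = C at hGn2
    generalize hD : Real.Gamma ((n:ℝ)/2 - (k:ℝ) - 1) = D at hGmk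
    set tr : ℝ := (n:ℝ)/2 - (k:ℝ) - 1 with htr
    have hnt : (n : ℝ) = 2*tr + 2*(k:ℝ) + 2 := by rw [htr]; ring
    rw [hnt]
    field_simp
    ring

lemma term_eq (n m k : ℕ) (hnm : n = 2 * m) (hm : 2 ≤ m) (r : ℝ) (hr0 : r ≠ 0)
    (hk1 : 1 ≤ k) (hk : k ≤ m - 1) :
    ((1 - r ^ 2) / 2) ^ 2 * ((cf n k * (k : ℝ) * (-2)) *
        ((((k - 1 : ℕ) : ℝ) * (1 - r ^ 2) ^ (k - 1 - 1) * (-2 * r)) * r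
          + (1 - r ^ 2) ^ (k - 1) * 1))
      + ((1 - r ^ 2) / 2) ^ 2 * (((n : ℝ) - 1) / r) *
          (cf n k * ((k : ℝ) * (1 - r ^ 2) ^ (k - 1) * (-2 * r)))
      + (((n : ℝ) - 2) * r * (1 - r ^ 2) / 2) *
          (cf n k * ((k : ℝ) * (1 - r ^ 2) ^ (k - 1) * (-2 * r)))
      = tf n r k - tf n r (k + 1) := by
  have htf : tf n r (k + 1)
      = -(cf n k * (k : ℝ) * ((n : ℝ) / 2 - (k : ℝ) - 1)) * (1 - r ^ 2) ^ (k + 1) := by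
    have h : tf n r (k + 1)
        = (cf n (k + 1) * ((k : ℝ) + 1) * ((k : ℝ) + 2 - (n : ℝ))) * (1 - r ^ 2) ^ (k + 1) := by
      unfold tf; push_cast; ring
    rw [h, cf_rec n m k hnm hm hk1 hk]
  rw [htf]
  unfold tf
  obtain ⟨j, rfl⟩ : ∃ j, k = j + 1 := ⟨k - 1, by omega⟩
  rcases j with _ | i
  · norm_num
    field_simp
    ring
  · simp only [Nat.add_sub_cancel]
    push_cast
    field_simp
    ring

/-- For even `n`, the radial function
`Ĩ_n(r) = ∑_{k=1}^{n/2-1} (1/(2k)) Γ((n-2)/2)Γ(n-k-1)/(Γ(n-2)Γ(n/2-k)) (1-r²)^k`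
satisfies the hyperbolic Poisson equation
`((1-r²)/2)² Ĩ_n'' + ((1-r²)/2)²((n-1)/r) Ĩ_n' + ((n-2)r(1-r²)/2) Ĩ_n' = -(n-2)(1-r²)/2`. -/
theorem stmt_13 (n : ℕ) (hn : 2 ≤ n) (he : Even n) (I : ℝ → ℝ)
    (hI : ∀ r : ℝ, I r = ∑ k ∈ Finset.Icc 1 (n / 2 - 1),
      (1 / (2 * (k : ℝ))) *
        (Real.Gamma (((n : ℝ) - 2) / 2) * Real.Gamma ((n : ℝ) - (k : ℝ) - 1)) /
        (Real.Gamma ((n : ℝ) - 2) * Real.Gamma ((n : ℝ) / 2 - (k : ℝ))) *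
        (1 - r ^ 2) ^ k)
    (r : ℝ) (hr0 : 0 < r) (hr1 : r < 1) :
    ((1 - r ^ 2) / 2) ^ 2 * deriv (deriv I) r +
        ((1 - r ^ 2) / 2) ^ 2 * (((n : ℝ) - 1) / r) * deriv I r +
        (((n : ℝ) - 2) * r * (1 - r ^ 2) / 2) * deriv I r
      = -(((n : ℝ) - 2) * (1 - r ^ 2) / 2) := by
  have h2 : n % 2 = 0 := Nat.even_iff.mp he
  have hnm : n = 2 * (n / 2) := by omega
  have hm1 : 1 ≤ n / 2 := by omega
  have hIe : I = fun x : ℝ => ∑ k ∈ Icc 1 (n / 2 - 1), cf n k * (1 - x ^ 2) ^ k := by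
    funext x; rw [hI]; rfl
  subst hIe
  have hd1 : deriv (fun x : ℝ => ∑ k ∈ Icc 1 (n / 2 - 1), cf n k * (1 - x ^ 2) ^ k)
      = fun y : ℝ => ∑ k ∈ Icc 1 (n / 2 - 1),
          cf n k * ((k : ℝ) * (1 - y ^ 2) ^ (k - 1) * (-2 * y)) :=
    funext fun y => (hasDeriv1 _ _ y).deriv
  rw [hd1, (hasDeriv2 (Icc 1 (n / 2 - 1)) (cf n) r).deriv]
  rw [Finset.mul_sum, Finset.mul_sum, Finset.mul_sum, ← Finset.sum_add_distrib,
    ← Finset.sum_add_distrib]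
  rw [Finset.sum_congr rfl (fun k hk => by
    simp only [Finset.mem_Icc] at hk
    exact term_eq n (n / 2) k hnm (by omega) r hr0.ne' hk.1 hk.2)]
  rw [tel (tf n r) (n / 2 - 1), show n / 2 - 1 + 1 = n / 2 by omega]
  rcases eq_or_lt_of_le hm1 with hm | hm
  · -- n = 2
    have hn2 : n = 2 := by omega
    subst hn2
    norm_num
  · -- n / 2 ≥ 2
    have hm2 : 2 ≤ n / 2 := hm
    have htfm : tf n r (n / 2) = 0 := by
      have h0 : (n : ℝ) / 2 - ((n / 2 : ℕ) : ℝ) = 0 := by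
        rw [show (n : ℝ) = ((2 * (n / 2) : ℕ) : ℝ) from by exact_mod_cast congrArg (Nat.cast : ℕ → ℝ) hnm]
        push_cast; ring
      unfold tf cf
      rw [h0, Real.Gamma_zero, mul_zero, div_zero]
      ring
    have htf1 : tf n r 1 = (1 / 2) * (2 - (n : ℝ)) * (1 - r ^ 2) := by
      have hnr : (n : ℝ) = 2 * ((n / 2 : ℕ) : ℝ) := by
        have := congrArg (Nat.cast : ℕ → ℝ) hnm; push_cast at this; linarith
      have hmr : (2 : ℝ) ≤ ((n / 2 : ℕ) : ℝ) := by exact_mod_cast hm2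
      have hGa : Real.Gamma ((n : ℝ) - 2) ≠ 0 := by
        refine (Real.Gamma_pos_of_pos ?_).ne'; rw [hnr]; linarith
      have hGb : Real.Gamma ((n : ℝ) / 2 - 1) ≠ 0 := by
        refine (Real.Gamma_pos_of_pos ?_).ne'
        rw [hnr, mul_comm, mul_div_assoc]; norm_num; linarith
      have hcf1 : cf n 1 = 1 / 2 := by
        unfold cf
        push_cast
        rw [show (n : ℝ) - 1 - 1 = (n : ℝ) - 2 by ring,
          show ((n : ℝ) - 2) / 2 = (n : ℝ) / 2 - 1 by ring, mul_div_assoc,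
          show Real.Gamma ((n:ℝ)/2-1) * Real.Gamma ((n:ℝ)-2) /
              (Real.Gamma ((n:ℝ)-2) * Real.Gamma ((n:ℝ)/2-1)) = 1 from by
            rw [mul_comm]; exact div_self (mul_ne_zero hGa hGb), mul_one]
        norm_num
      unfold tf
      rw [hcf1]
      push_cast
      ring
    rw [htfm, htf1]
    ring
end

section
/- Let n ≥ 2, let K(v₀,λ;y,w) = c(y_n^{n−1}/|(w,0)−y|^{2n−2} − (λ/|w−v₀|)^{2n−2} y_n^{n−1}/|y − v − (λ²/|w−v₀|²)((w,0)−v)|^{2n−2}) with v = (v₀,0), c > 0. Then for y in the upper half space and w ∈ R^{n−1} with |w−v₀| = λ, the radial boundary derivative satisfies ⟨∇_w K(v₀,λ;y,w), w−v₀⟩ = −(2(n−1) c y_n^{n−1}/|(w,0)−y|^{2n}) · (|w−v₀|² − |y−v|²). -/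
set_option maxHeartbeats 1000000 in
/-- Radial boundary derivative of `K(v₀,λ;y,w) = p_{2-n}(y,w) - p_{2-n}(φ_{λ,v}(y),w)`:
for `|w - v₀| = λ`,
`⟨∇_w K, w - v₀⟩ = -(2(n-1) c y_n^{n-1}/|(w,0)-y|^{2n}) (|w-v₀|² - |y-v|²)`. -/
theorem stmt_17 (n : ℕ) (hn : 2 ≤ n) (c : ℝ) (hc : 0 < c) (lam : ℝ) (hlam : 0 < lam)
    (v₀ y' : EuclideanSpace ℝ (Fin (n - 1))) (t : ℝ) (ht : 0 < t)
    (K : EuclideanSpace ℝ (Fin (n - 1)) → ℝ)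
    (hK : ∀ u : EuclideanSpace ℝ (Fin (n - 1)),
      K u = c * (t ^ (n - 1) / ((‖u - y'‖ ^ 2 + t ^ 2) ^ (n - 1)) -
        (lam / ‖u - v₀‖) ^ (2 * n - 2) * t ^ (n - 1) /
          ((‖y' - v₀ - (lam ^ 2 / ‖u - v₀‖ ^ 2) • (u - v₀)‖ ^ 2 + t ^ 2) ^ (n - 1))))
    (w : EuclideanSpace ℝ (Fin (n - 1))) (hw : ‖w - v₀‖ = lam) :
    fderiv ℝ K w (w - v₀) =
      -(2 * ((n : ℝ) - 1) * c * t ^ (n - 1) / ((‖w - y'‖ ^ 2 + t ^ 2) ^ n)) *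
        (‖w - v₀‖ ^ 2 - (‖y' - v₀‖ ^ 2 + t ^ 2)) := by
  obtain ⟨m, rfl⟩ : ∃ m, n = m + 2 := ⟨n - 2, by omega⟩
  clear hn
  have hexp : 2 * (m + 2) - 2 = 2 * m + 2 := by omega
  rw [hexp] at hK
  simp only [show m + 2 - 1 = m + 1 from rfl] at hK ⊢
  -- scalar abbreviations
  set a0 : ℝ := ‖w - y'‖ ^ 2 + t ^ 2 with ha0
  set b0 : ℝ := ‖y' - v₀‖ ^ 2 + t ^ 2 with hb0
  set p : ℝ := (inner ℝ (w - v₀) (w - y') : ℝ) with hp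
  set q : ℝ := (inner ℝ (y' - v₀) (w - v₀) : ℝ) with hq
  have ha0pos : 0 < a0 := by positivity
  have ha0ne : a0 ≠ 0 := ha0pos.ne'
  have hlamne : lam ≠ 0 := hlam.ne'
  have hpq : p + q = lam ^ 2 := by
    rw [hp, hq, real_inner_comm (w - v₀) (y' - v₀), ← inner_add_right]
    have : (w - y') + (y' - v₀) = w - v₀ := by abel
    rw [this, real_inner_self_eq_norm_sq, hw]
  have hC0eq : lam ^ 2 + b0 - 2 * q = a0 := by
    have hns : ‖w - y'‖ ^ 2 = ‖w - v₀‖ ^ 2 - 2 * (inner ℝ (w - v₀) (y' - v₀) : ℝ) + ‖y' - v₀‖ ^ 2 := by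
      have : w - y' = (w - v₀) - (y' - v₀) := by abel
      rw [this, norm_sub_sq_real]
    rw [ha0, hb0, hns, hw, real_inner_comm, ← hq]
    ring
  -- the one-variable functions
  set A : ℝ → ℝ := fun s => a0 + 2 * p * s + lam ^ 2 * s ^ 2 with hA
  set C : ℝ → ℝ := fun s => lam ^ 2 + b0 * (1 + s) ^ 2 - 2 * q * (1 + s) with hC
  have hA0 : A 0 = a0 := by simp [hA]
  have hC0 : C 0 = a0 := by simp [hC]; linarith [hC0eq]
  set f : ℝ → ℝ := fun s => c * t ^ (m + 1) * (((A s) ^ (m + 1))⁻¹ - ((C s) ^ (m + 1))⁻¹)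
    with hf
  -- derivative of f at 0
  have hAd : HasDerivAt A (2 * p) 0 := by
    have h1 : HasDerivAt (fun s : ℝ => a0 + 2 * p * s + lam ^ 2 * s ^ 2)
        (0 + 2 * p * 1 + lam ^ 2 * (↑2 * 0 ^ (2 - 1))) 0 := by
      exact ((hasDerivAt_const 0 a0).add ((hasDerivAt_id 0).const_mul (2 * p))).add
        ((hasDerivAt_pow 2 0).const_mul (lam ^ 2))
    simpa using h1
  have hCd : HasDerivAt C (2 * b0 - 2 * q) 0 := by
    have hone : HasDerivAt (fun s : ℝ => 1 + s) 1 0 := by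
      exact HasDerivAt.const_add 1 (hasDerivAt_id' 0)
    have h1 : HasDerivAt (fun s : ℝ => lam ^ 2 + b0 * (1 + s) ^ 2 - 2 * q * (1 + s))
        (0 + b0 * (↑2 * (1 + 0) ^ (2 - 1) * 1) - 2 * q * 1) 0 := by
      exact ((hasDerivAt_const 0 (lam ^ 2)).add ((hone.pow 2).const_mul b0)).sub
        (hone.const_mul (2 * q))
    convert h1 using 1
    norm_num
    ring
  have hApne : (A 0) ^ (m + 1) ≠ 0 := by rw [hA0]; positivity
  have hCpne : (C 0) ^ (m + 1) ≠ 0 := by rw [hC0]; positivity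
  have hfd : HasDerivAt f
      (c * t ^ (m + 1) *
        (-(↑(m + 1) * A 0 ^ (m + 1 - 1) * (2 * p)) / (A 0 ^ (m + 1)) ^ 2 -
         -(↑(m + 1) * C 0 ^ (m + 1 - 1) * (2 * b0 - 2 * q)) / (C 0 ^ (m + 1)) ^ 2)) 0 := by
    exact (((hAd.pow (m + 1)).inv hApne).sub ((hCd.pow (m + 1)).inv hCpne)).const_mul
      (c * t ^ (m + 1))
  -- identify f's derivative with the RHS
  have hval : c * t ^ (m + 1) *
        (-(↑(m + 1) * A 0 ^ (m + 1 - 1) * (2 * p)) / (A 0 ^ (m + 1)) ^ 2 -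
         -(↑(m + 1) * C 0 ^ (m + 1 - 1) * (2 * b0 - 2 * q)) / (C 0 ^ (m + 1)) ^ 2) =
      -(2 * ((↑(m + 2) : ℝ) - 1) * c * t ^ (m + 1) / (a0 ^ (m + 2))) *
        (‖w - v₀‖ ^ 2 - b0) := by
    rw [hA0, hC0]
    have hcast : ((↑(m + 2) : ℝ) - 1) = (m : ℝ) + 1 := by push_cast; ring
    have hw2 : ‖w - v₀‖ ^ 2 = p + q := by rw [hw, ← hpq]
    rw [hcast, hw2]
    have hpow : (a0 ^ (m + 1)) ^ 2 = a0 ^ (m + 1 - 1) * a0 ^ (m + 2) := by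
      rw [← pow_mul, ← pow_add]; congr 1; omega
    rw [hpow]
    have ham : a0 ^ (m + 1 - 1) ≠ 0 := by positivity
    have han : a0 ^ (m + 2) ≠ 0 := by positivity
    field_simp
    push_cast
    ring
  -- K is differentiable at w
  have hwv : ‖w - v₀‖ ^ 2 ≠ 0 := by rw [hw]; positivity
  have hKdiff : DifferentiableAt ℝ K w := by
    set Kt : EuclideanSpace ℝ (Fin (m + 2 - 1)) → ℝ := fun u =>
      c * (t ^ (m + 1) / ((‖u - y'‖ ^ 2 + t ^ 2) ^ (m + 1)) -
        lam ^ (2 * m + 2) * t ^ (m + 1) /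
          ((‖u - v₀‖ ^ 2) ^ (m + 1) *
            ((‖y' - v₀ - (lam ^ 2 / ‖u - v₀‖ ^ 2) • (u - v₀)‖ ^ 2 + t ^ 2) ^ (m + 1)))) with hKt
    have hEq : ∀ u : EuclideanSpace ℝ (Fin (m + 2 - 1)), u ≠ v₀ → K u = Kt u := by
      intro u hu
      have hr : ‖u - v₀‖ ≠ 0 := by
        simpa [sub_eq_zero] using hu
      have hr2 : (‖u - v₀‖ ^ 2) ^ (m + 1) ≠ 0 := by positivity
      have hD : (‖y' - v₀ - (lam ^ 2 / ‖u - v₀‖ ^ 2) • (u - v₀)‖ ^ 2 + t ^ 2) ^ (m + 1) ≠ 0 := by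
        positivity
      rw [hK u, hKt]
      have h1 : (lam / ‖u - v₀‖) ^ (2 * m + 2) =
          lam ^ (2 * m + 2) / (‖u - v₀‖ ^ 2) ^ (m + 1) := by
        rw [div_pow, ← pow_mul, show 2 * (m + 1) = 2 * m + 2 from by ring]
      rw [h1]
      field_simp
      try ring
    have hmem : {u : EuclideanSpace ℝ (Fin (m + 2 - 1)) | u ≠ v₀} ∈ nhds w := by
      apply IsOpen.mem_nhds isOpen_ne
      intro h
      rw [h] at hw
      simp at hw
      exact hlamne hw.symm
    have hEv : K =ᶠ[nhds w] Kt := Filter.eventuallyEq_of_mem hmem (fun u hu => hEq u hu)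
    have hd0 : DifferentiableAt ℝ (fun u : EuclideanSpace ℝ (Fin (m + 2 - 1)) => ‖u - v₀‖ ^ 2) w :=
      (differentiable_id.sub_const v₀).differentiableAt.norm_sq ℝ
    have hd1 : DifferentiableAt ℝ (fun u : EuclideanSpace ℝ (Fin (m + 2 - 1)) => ‖u - y'‖ ^ 2 + t ^ 2) w :=
      ((differentiable_id.sub_const y').differentiableAt.norm_sq ℝ).add_const _
    have hd2 : DifferentiableAt ℝ
        (fun u : EuclideanSpace ℝ (Fin (m + 2 - 1)) => ‖y' - v₀ - (lam ^ 2 / ‖u - v₀‖ ^ 2) • (u - v₀)‖ ^ 2 + t ^ 2) w := by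
      have hsc : DifferentiableAt ℝ (fun u : EuclideanSpace ℝ (Fin (m + 2 - 1)) => lam ^ 2 / ‖u - v₀‖ ^ 2) w := by
        simp only [div_eq_mul_inv]
        exact (hd0.inv hwv).const_mul _
      have hin : DifferentiableAt ℝ
          (fun u : EuclideanSpace ℝ (Fin (m + 2 - 1)) => y' - v₀ - (lam ^ 2 / ‖u - v₀‖ ^ 2) • (u - v₀)) w :=
        (differentiableAt_const _).sub (hsc.smul ((differentiable_id.sub_const v₀).differentiableAt))
      exact (hin.norm_sq ℝ).add_const _
    have hd1' : (‖w - y'‖ ^ 2 + t ^ 2) ^ (m + 1) ≠ 0 := by positivity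
    have hd2' : (‖w - v₀‖ ^ 2) ^ (m + 1) *
        ((‖y' - v₀ - (lam ^ 2 / ‖w - v₀‖ ^ 2) • (w - v₀)‖ ^ 2 + t ^ 2) ^ (m + 1)) ≠ 0 := by
      apply mul_ne_zero
      · positivity
      · positivity
    have hKtdiff : DifferentiableAt ℝ Kt w := by
      rw [hKt]
      simp only [div_eq_mul_inv]
      apply DifferentiableAt.const_mul
      apply DifferentiableAt.sub
      · exact ((hd1.pow (m + 1)).inv hd1').const_mul _
      · exact (((hd0.pow (m + 1)).mul (hd2.pow (m + 1))).inv hd2').const_mul _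
    exact hKtdiff.congr_of_eventuallyEq hEv
  -- composition along the line
  set γ : ℝ → EuclideanSpace ℝ (Fin (m + 2 - 1)) := fun s => w + s • (w - v₀) with hγ
  have hγd : HasDerivAt γ (w - v₀) 0 := by
    have : HasDerivAt (fun s : ℝ => s • (w - v₀)) ((1 : ℝ) • (w - v₀)) 0 :=
      (hasDerivAt_id 0).smul_const (w - v₀)
    rw [one_smul] at this; exact HasDerivAt.const_add w this
  have hγ0 : γ 0 = w := by simp [hγ]
  have hgd : HasDerivAt (K ∘ γ) (fderiv ℝ K w (w - v₀)) 0 := by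
    have h : HasFDerivAt K (fderiv ℝ K w) (γ 0) := by rw [hγ0]; exact hKdiff.hasFDerivAt
    exact h.comp_hasDerivAt 0 hγd
  -- K ∘ γ agrees with f near 0
  have hgf : K ∘ γ =ᶠ[nhds (0 : ℝ)] f := by
    filter_upwards [Ioo_mem_nhds (show (-1 : ℝ) < 0 by norm_num) (show (0 : ℝ) < 1 by norm_num)]
      with s hs
    have h1s : (0 : ℝ) < 1 + s := by linarith [hs.1]
    have h1ne : (1 : ℝ) + s ≠ 0 := h1s.ne'
    show K (w + s • (w - v₀)) = f s
    rw [hK (w + s • (w - v₀))]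
    have huv : w + s • (w - v₀) - v₀ = (1 + s) • (w - v₀) := by
      rw [add_smul, one_smul]; abel
    have hnu : ‖w + s • (w - v₀) - v₀‖ = (1 + s) * lam := by
      rw [huv, norm_smul, Real.norm_eq_abs, abs_of_pos h1s, hw]
    have hnu2 : ‖w + s • (w - v₀) - v₀‖ ^ 2 = (1 + s) ^ 2 * lam ^ 2 := by rw [hnu]; ring
    have hAs : ‖w + s • (w - v₀) - y'‖ ^ 2 + t ^ 2 = A s := by
      rw [add_sub_right_comm, norm_add_sq_real, real_inner_smul_right, norm_smul,
        Real.norm_eq_abs, hw, real_inner_comm (w - v₀) (w - y'), ← hp]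
      simp only [hA, ha0]
      rw [mul_pow, sq_abs]
      ring
    have hApos : 0 < A s := by rw [← hAs]; positivity
    have hφ : y' - v₀ - (lam ^ 2 / ‖w + s • (w - v₀) - v₀‖ ^ 2) • (w + s • (w - v₀) - v₀)
        = y' - v₀ - ((1 + s)⁻¹) • (w - v₀) := by
      rw [hnu2, huv, smul_smul]
      congr 2
      field_simp
    have hBC : (1 + s) ^ 2 * (‖y' - v₀ - ((1 + s)⁻¹) • (w - v₀)‖ ^ 2 + t ^ 2) = C s := by
      rw [norm_sub_sq_real, real_inner_smul_right, norm_smul, Real.norm_eq_abs, hw, ← hq]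
      simp only [hC]
      rw [hb0]
      have habs : |(1 + s)⁻¹| = (1 + s)⁻¹ := abs_of_pos (by positivity)
      rw [habs]
      field_simp
      ring
    have hDpos : 0 < ‖y' - v₀ - ((1 + s)⁻¹) • (w - v₀)‖ ^ 2 + t ^ 2 := by positivity
    have hCpos : 0 < C s := by
      rw [← hBC]
      exact mul_pos (pow_pos h1s 2) hDpos
    rw [hAs, hφ, hnu]
    have hfr : lam / ((1 + s) * lam) = (1 + s)⁻¹ := by
      field_simp
    rw [hfr]
    simp only [hf]
    rw [← hBC]
    have hpow2 : ((1 + s) ^ 2 * (‖y' - v₀ - ((1 + s)⁻¹) • (w - v₀)‖ ^ 2 + t ^ 2)) ^ (m + 1)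
        = (1 + s) ^ (2 * m + 2) * (‖y' - v₀ - ((1 + s)⁻¹) • (w - v₀)‖ ^ 2 + t ^ 2) ^ (m + 1) := by
      rw [mul_pow, ← pow_mul, show 2 * (m + 1) = 2 * m + 2 from by ring]
    rw [hpow2]
    rw [inv_pow]
    field_simp
  have hfd' : HasDerivAt (K ∘ γ) (c * t ^ (m + 1) *
        (-(↑(m + 1) * A 0 ^ (m + 1 - 1) * (2 * p)) / (A 0 ^ (m + 1)) ^ 2 -
         -(↑(m + 1) * C 0 ^ (m + 1 - 1) * (2 * b0 - 2 * q)) / (C 0 ^ (m + 1)) ^ 2)) 0 :=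
    hfd.congr_of_eventuallyEq hgf
  have := hgd.unique hfd'
  rw [this, hval]
end
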